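/- arXiv:2402.00850 — 6 statements merged into one kernel-verified Lean document; each statement's English description precedes it below -/
import Mathlib

section
/- Let V1, V2 be subspaces of F_q^d with dim(V1) = d1, dim(V2) = d2, and suppose d3 + d1 ≤ d2. If V3 is a uniformly random d3-dimensional subspace of V2, then the probability that dim(V3 + V1) < d3 + d1 is at most 1/(q-1). -/
/-!
Work inside `V2`, of dimension `n`, with `U = V1 ∩ V2`; then `dim U + d3 ≤ n` and the bad
event is `V3 ∩ U ≠ 0`. Since `GL(V2)` acts transitively on nonzero vectors, each nonzero
vector lies in the same number `N` of `d3`-subspaces. Counting pairs `(x, V3)` with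
`0 ≠ x ∈ V3` in two ways gives `(q^n - 1) N = #{V3} (q^d3 - 1)`; since a bad `V3` contains at
least `q - 1` nonzero vectors of `U`, also `(q - 1) #{bad} ≤ (q^dim U - 1) N`. Together with
`(q^dim U - 1)(q^d3 - 1) ≤ q^n - 1` this gives `(q - 1) #{bad} ≤ #{V3}`.
-/

open Module Finset

theorem exists_linearEquiv_apply_eq {K V : Type*} [Field K] [AddCommGroup V] [Module K V]
    {x y : V} (hx : x ≠ 0) (hy : y ≠ 0) : ∃ g : V ≃ₗ[K] V, g x = y := by
  obtain ⟨g, hg⟩ := Submodule.exists_linearEquiv_restrict_eq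
    ((LinearEquiv.toSpanNonzeroSingleton K V x hx).symm ≪≫ₗ
      LinearEquiv.toSpanNonzeroSingleton K V y hy)
  refine ⟨g, ?_⟩
  have := hg (LinearEquiv.toSpanNonzeroSingleton K V x hx 1)
  rw [LinearEquiv.trans_apply, LinearEquiv.symm_apply_apply] at this
  simpa using this.symm

theorem Submodule.finrank_sup_lt_add_iff {K V : Type*} [DivisionRing K] [AddCommGroup V]
    [Module K V] (U W : Submodule K V) [FiniteDimensional K U] [FiniteDimensional K W] :
    finrank K ↥(U ⊔ W) < finrank K U + finrank K W ↔ U ⊓ W ≠ ⊥ := by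
  rw [← U.finrank_sup_add_finrank_inf_eq W, Ne, ← Submodule.finrank_eq_zero]
  omega

theorem Nat.pow_sub_one_mul_pow_sub_one_le (q a b : ℕ) :
    (q ^ a - 1) * (q ^ b - 1) ≤ q ^ (a + b) - 1 := by
  rcases q.eq_zero_or_pos with rfl | hq
  · rcases a.eq_zero_or_pos with rfl | ha <;> simp [*]
  calc (q ^ a - 1) * (q ^ b - 1) ≤ (q ^ a - 1) * q ^ b :=
        Nat.mul_le_mul_left _ (Nat.sub_le _ _)
    _ = q ^ (a + b) - q ^ b := by rw [Nat.sub_mul, one_mul, pow_add]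
    _ ≤ q ^ (a + b) - 1 := Nat.sub_le_sub_left (Nat.one_le_pow _ _ hq) _

theorem Submodule.natCard_le_and_eq_natCard_map_subtype {R M : Type*} [Ring R] [AddCommGroup M]
    [Module R M] (p : Submodule R M) (P : Submodule R M → Prop) :
    Nat.card {V : Submodule R M // V ≤ p ∧ P V}
      = Nat.card {W : Submodule R p // P (W.map p.subtype)} :=
  Nat.card_congr <| (Equiv.subtypeSubtypeEquivSubtypeInter (· ≤ p) P).symm.trans
    (p.mapIic.toEquiv.subtypeEquiv fun _ => Iff.rfl).symm

section Counting

open scoped Classical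

variable {F M : Type*} [Field F] [AddCommGroup M] [Module F M] [Fintype M]

theorem Submodule.card_filter_mem_and_ne_zero [Fintype F] (W : Submodule F M) :
    #{x : M | x ∈ W ∧ x ≠ 0} = Fintype.card F ^ finrank F W - 1 := by
  have : ({x : M | x ∈ W ∧ x ≠ 0} : Finset M) = ({x : M | x ∈ W} : Finset M).erase 0 := by
    ext; simp [and_comm]
  rw [this, card_erase_of_mem (by simp), ← Fintype.card_subtype,
    card_eq_pow_finrank (K := F) (V := W)]

theorem card_finrank_eq_mem_eq_of_ne_zero (k : ℕ) {x y : M} (hx : x ≠ 0) (hy : y ≠ 0) :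
    #{W : Submodule F M | finrank F W = k ∧ x ∈ W}
      = #{W : Submodule F M | finrank F W = k ∧ y ∈ W} := by
  obtain ⟨g, rfl⟩ := exists_linearEquiv_apply_eq (K := F) hx hy
  refine card_equiv (Submodule.orderIsoMapComap g).toEquiv fun W => ?_
  simp [LinearEquiv.finrank_map_eq, Submodule.mem_map_equiv]

variable [Fintype F]

theorem pow_finrank_sub_one_mul_card_mem_eq (k : ℕ) {x₀ : M} (hx₀ : x₀ ≠ 0) :
    (Fintype.card F ^ finrank F M - 1) * #{W : Submodule F M | finrank F W = k ∧ x₀ ∈ W}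
      = #{W : Submodule F M | finrank F W = k} * (Fintype.card F ^ k - 1) := by
  rw [← finrank_top F M, ← Submodule.card_filter_mem_and_ne_zero]
  refine card_mul_eq_card_mul (fun x W => x ∈ W) (fun x hx => ?_) (fun W hW => ?_)
  · simp only [mem_filter, mem_univ, true_and] at hx
    rw [bipartiteAbove, filter_filter]
    exact card_finrank_eq_mem_eq_of_ne_zero k hx.2 hx₀
  · simp only [mem_filter, mem_univ, true_and] at hW
    rw [bipartiteBelow, filter_filter, ← hW, ← Submodule.card_filter_mem_and_ne_zero]
    congr 1; ext; simp [and_comm]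

theorem card_inf_ne_bot_mul_le_mul_card_mem (k : ℕ) (U : Submodule F M) {x₀ : M}
    (hx₀ : x₀ ≠ 0) :
    #{W : Submodule F M | finrank F W = k ∧ W ⊓ U ≠ ⊥} * (Fintype.card F - 1)
      ≤ (Fintype.card F ^ finrank F U - 1)
        * #{W : Submodule F M | finrank F W = k ∧ x₀ ∈ W} := by
  rw [← Submodule.card_filter_mem_and_ne_zero]
  refine card_mul_le_card_mul (fun W x => x ∈ W) (fun W hW => ?_) (fun x hx => ?_)
  · simp only [mem_filter, mem_univ, true_and] at hW
    have hpos : 0 < finrank F ↥(W ⊓ U) :=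
      Nat.pos_of_ne_zero fun h => hW.2 (Submodule.finrank_eq_zero.mp h)
    calc Fintype.card F - 1 ≤ Fintype.card F ^ finrank F ↥(W ⊓ U) - 1 :=
          Nat.sub_le_sub_right (Nat.le_self_pow hpos.ne' _) 1
      _ = _ := by
        rw [← Submodule.card_filter_mem_and_ne_zero, bipartiteAbove, filter_filter]
        congr 1; ext; simp only [mem_filter, Submodule.mem_inf]; tauto
  · simp only [mem_filter, mem_univ, true_and] at hx
    rw [← card_finrank_eq_mem_eq_of_ne_zero k hx.2 hx₀, bipartiteBelow, filter_filter]
    exact card_le_card fun W => by simp +contextual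

theorem card_finrank_eq_inf_ne_bot_mul_le (k : ℕ) (U : Submodule F M)
    (h : finrank F U + k ≤ finrank F M) :
    #{W : Submodule F M | finrank F W = k ∧ W ⊓ U ≠ ⊥} * (Fintype.card F - 1)
      ≤ #{W : Submodule F M | finrank F W = k} := by
  rcases eq_or_ne U ⊥ with rfl | hU
  · simp
  obtain ⟨x₀, -, hx₀⟩ := U.ne_bot_iff.mp hU
  have hC := pow_finrank_sub_one_mul_card_mem_eq (F := F) k hx₀
  set q := Fintype.card F
  have : Nontrivial M := ⟨⟨x₀, 0, hx₀⟩⟩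
  have hM : 0 < q ^ finrank F M - 1 :=
    Nat.sub_pos_of_lt (Nat.one_lt_pow finrank_pos.ne' Fintype.one_lt_card)
  have hpow : (q ^ finrank F U - 1) * (q ^ k - 1) ≤ q ^ finrank F M - 1 :=
    (Nat.pow_sub_one_mul_pow_sub_one_le q _ k).trans
      (Nat.sub_le_sub_right (Nat.pow_le_pow_right Fintype.card_pos h) 1)
  refine Nat.le_of_mul_le_mul_right ?_ hM
  calc _ ≤ (q ^ finrank F U - 1) * #{W : Submodule F M | finrank F W = k ∧ x₀ ∈ W}
          * (q ^ finrank F M - 1) :=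
        Nat.mul_le_mul_right _ (card_inf_ne_bot_mul_le_mul_card_mem k U hx₀)
    _ = #{W : Submodule F M | finrank F W = k} * ((q ^ finrank F U - 1) * (q ^ k - 1)) := by
        rw [mul_assoc, mul_comm _ (q ^ finrank F M - 1), hC]
        ring
    _ ≤ _ := Nat.mul_le_mul_left _ hpow

end Counting

/-- Let `V1, V2` be subspaces of `F_q^d` with `dim V1 = d1`,
`dim V2 = d2`, and `d3 + d1 ≤ d2`. If `V3` is a uniformly random `d3`-dimensional
subspace of `V2`, then `Pr[dim (V3 + V1) < d3 + d1] ≤ 1/(q-1)`. -/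
theorem stmt0 (q d d1 d2 d3 : ℕ) (F : Type) [Field F] [Fintype F]
    (hq : Fintype.card F = q)
    (V1 V2 : Submodule F (Fin d → F))
    (h1 : finrank F V1 = d1) (h2 : finrank F V2 = d2)
    (h3 : d3 + d1 ≤ d2) :
    (Nat.card {V3 : Submodule F (Fin d → F) //
        V3 ≤ V2 ∧ finrank F V3 = d3 ∧ finrank F ↥(V3 ⊔ V1) < d3 + d1} : ℝ)
      ≤ (Nat.card {V3 : Submodule F (Fin d → F) // V3 ≤ V2 ∧ finrank F V3 = d3} : ℝ)
        / ((q : ℝ) - 1) := by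
  classical
  set U := V1.comap V2.subtype
  have hbad (W : Submodule F V2) :
      (finrank F (W.map V2.subtype) = d3 ∧ finrank F ↥(W.map V2.subtype ⊔ V1) < d3 + d1)
        ↔ finrank F W = d3 ∧ W ⊓ U ≠ ⊥ := by
    rw [Submodule.finrank_map_subtype_eq]
    refine and_congr_right fun hW => ?_
    rw [← hW, ← Submodule.finrank_map_subtype_eq V2 W, ← h1,
      Submodule.finrank_sup_lt_add_iff, Submodule.map_inf_eq_map_inf_comap,
      (Submodule.map_injective_of_injective V2.injective_subtype).ne_iff' (Submodule.map_bot _)]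
  have hU : finrank F U + d3 ≤ finrank F V2 := by
    have : finrank F U ≤ d1 := by
      rw [← Submodule.finrank_map_subtype_eq, Submodule.map_comap_subtype, ← h1]
      exact Submodule.finrank_mono inf_le_right
    omega
  have hq1 : 1 < q := hq ▸ Fintype.one_lt_card
  rw [Submodule.natCard_le_and_eq_natCard_map_subtype,
    Submodule.natCard_le_and_eq_natCard_map_subtype, Nat.card_congr (Equiv.subtypeEquivRight hbad),
    ← Nat.cast_pred (by omega),
    le_div_iff₀ (by exact_mod_cast Nat.sub_pos_of_lt hq1)]
  simp only [Submodule.finrank_map_subtype_eq, Nat.card_eq_fintype_card, Fintype.card_subtype]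
  exact_mod_cast hq ▸ card_finrank_eq_inf_ne_bot_mul_le d3 U hU
end

section
/- Let Φ = (G, Π) be an affine Unique-Games instance over the symmetric group S_m on a graph G whose normalized adjacency matrix has second eigenvalue at most λ < 1. For any two assignments X, X' : V(G) → S_m, there exists a permutation π ∈ S_m such that Pr_{v ∈ V(G)}[X(v) ≠ X'(v)·π] ≤ (viol(X) + viol(X'))/(1 − λ). -/
/-!
Put `Y v = (X' v)⁻¹ * X v`. If an edge `(u, v)` is satisfied by both `X` and `X'` then
`Y u = Y v`, so `Y` changes across edges of total weight at most `viol X + viol X'`.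
Applying the Poincaré inequality `2 (1 - λ) Var_μ f ≤ ∑ w u v (f u - f v)²` to the indicators
of the level sets of `Y` and summing over them gives
`(1 - λ) (1 - ∑_π p_π²) ≤ Pr_w[Y u ≠ Y v]` with `p_π = μ(Y = π)`. Since `∑ p_π² ≤ max p`,
the most popular value `π₀` of `Y` satisfies `(1 - λ) μ(Y ≠ π₀) ≤ viol X + viol X'`.
-/

open Finset

section SpectralGap

variable {V : Type*} [Fintype V] {w : V → V → ℝ}

theorem sum_weight_mul_sq_sub (hsym : ∀ u v, w u v = w v u) (g : V → ℝ) :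
    ∑ u, ∑ v, w u v * (g u - g v) ^ 2 =
      2 * (∑ v, (∑ u, w v u) * g v ^ 2 - ∑ u, ∑ v, w u v * g u * g v) := by
  have hexpand : ∀ u v, w u v * (g u - g v) ^ 2 =
      w u v * g u ^ 2 + w v u * g v ^ 2 - 2 * (w u v * g u * g v) := by
    intro u v; rw [hsym v u]; ring
  simp only [hexpand, sum_sub_distrib, sum_add_distrib, ← mul_sum, ← sum_mul]
  rw [sum_comm (f := fun u v => w v u * g v ^ 2)]
  simp only [← sum_mul]
  ring

theorem sum_stationary_mul_sub_mean (hsum : ∑ u, ∑ v, w u v = 1) (f : V → ℝ) :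
    ∑ v, (∑ u, w v u) * (f v - ∑ x, (∑ u, w x u) * f x) = 0 := by
  simp only [mul_sub, sum_sub_distrib, ← sum_mul, hsum, one_mul, sub_self]

theorem sum_stationary_mul_sub_mean_sq (hsum : ∑ u, ∑ v, w u v = 1) (f : V → ℝ) :
    ∑ v, (∑ u, w v u) * (f v - ∑ x, (∑ u, w x u) * f x) ^ 2 =
      ∑ v, (∑ u, w v u) * f v ^ 2 - (∑ v, (∑ u, w v u) * f v) ^ 2 := by
  set p := ∑ x, (∑ u, w x u) * f x
  have hexpand : ∀ v, (∑ u, w v u) * (f v - p) ^ 2 =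
      (∑ u, w v u) * f v ^ 2 - 2 * p * ((∑ u, w v u) * f v) + p ^ 2 * ∑ u, w v u := by
    intro v; ring
  simp only [hexpand, sum_add_distrib, sum_sub_distrib, ← mul_sum, hsum]
  ring

theorem two_mul_variance_le_dirichlet (hsym : ∀ u v, w u v = w v u)
    (hsum : ∑ u, ∑ v, w u v = 1) {lam : ℝ}
    (hlam : ∀ f : V → ℝ, (∑ v, (∑ u, w v u) * f v) = 0 →
      (∑ u, ∑ v, w u v * f u * f v) ≤ lam * ∑ v, (∑ u, w v u) * (f v) ^ 2)
    (f : V → ℝ) :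
    2 * (1 - lam) * (∑ v, (∑ u, w v u) * f v ^ 2 - (∑ v, (∑ u, w v u) * f v) ^ 2) ≤
      ∑ u, ∑ v, w u v * (f u - f v) ^ 2 := by
  set g := fun v => f v - ∑ x, (∑ u, w x u) * f x
  have hshift : ∀ u v, f u - f v = g u - g v := fun u v => by simp only [g]; ring
  have hgap := hlam g (sum_stationary_mul_sub_mean hsum f)
  rw [← sum_stationary_mul_sub_mean_sq hsum f]
  simp only [hshift, sum_weight_mul_sq_sub hsym g]
  linarith

theorem sum_sq_le_mul_sum_of_forall_le {α : Type*} [Fintype α] {p : α → ℝ}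
    (hp : ∀ a, 0 ≤ p a) {a₀ : α} (hmax : ∀ a, p a ≤ p a₀) :
    ∑ a, p a ^ 2 ≤ p a₀ * ∑ a, p a := by
  rw [mul_sum]
  exact sum_le_sum fun a _ => by nlinarith [hp a, hmax a]

theorem sum_sq_indicator_sub_indicator {α : Type*} [Fintype α] [DecidableEq α] (a b : α) :
    ∑ c, ((if a = c then (1 : ℝ) else 0) - (if b = c then 1 else 0)) ^ 2 =
      if a = b then 0 else 2 := by
  split_ifs with hab
  · simp [hab]
  · have hsq : ∀ c, ((if a = c then (1 : ℝ) else 0) - (if b = c then 1 else 0)) ^ 2 =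
        (if a = c then 1 else 0) + (if b = c then 1 else 0) := by
      intro c
      by_cases hac : a = c <;> by_cases hbc : b = c
      · exact absurd (hac.trans hbc.symm) hab
      all_goals simp [hac, hbc]
    simp only [hsq, sum_add_distrib, sum_ite_eq, mem_univ, if_true]
    norm_num

theorem exists_stationary_mass_ne_le {α : Type*} [Fintype α] [DecidableEq α] [Nonempty α]
    (hw : ∀ u v, 0 ≤ w u v) (hsym : ∀ u v, w u v = w v u)
    (hsum : ∑ u, ∑ v, w u v = 1) {lam : ℝ} (hlam1 : lam ≤ 1)
    (hlam : ∀ f : V → ℝ, (∑ v, (∑ u, w v u) * f v) = 0 →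
      (∑ u, ∑ v, w u v * f u * f v) ≤ lam * ∑ v, (∑ u, w v u) * (f v) ^ 2)
    (Y : V → α) :
    ∃ a₀, (1 - lam) * ∑ v, (∑ u, w v u) * (if Y v ≠ a₀ then (1 : ℝ) else 0) ≤
      ∑ u, ∑ v, w u v * (if Y u ≠ Y v then (1 : ℝ) else 0) := by
  set ind : α → V → ℝ := fun a v => if Y v = a then 1 else 0
  set p : α → ℝ := fun a => ∑ v, (∑ u, w v u) * ind a v
  have hind_sq : ∀ a v, ind a v ^ 2 = ind a v := fun a v => by
    by_cases h : Y v = a <;> simp [ind, h]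
  have hp_nonneg : ∀ a, 0 ≤ p a := fun a =>
    sum_nonneg fun v _ => mul_nonneg (sum_nonneg fun u _ => hw v u) (by positivity)
  have hp_sum : ∑ a, p a = 1 := by
    simp only [p, ind]
    rw [sum_comm]
    simp [sum_ite_eq, hsum]
  obtain ⟨a₀, -, hmax⟩ := exists_max_image univ p univ_nonempty
  refine ⟨a₀, ?_⟩
  have hmass : ∑ v, (∑ u, w v u) * (if Y v ≠ a₀ then (1 : ℝ) else 0) = 1 - p a₀ := by
    have hcompl : ∀ v, (if Y v ≠ a₀ then (1 : ℝ) else 0) = 1 - ind a₀ v := fun v => by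
      by_cases h : Y v = a₀ <;> simp [ind, h]
    simp only [hcompl, mul_sub, mul_one, sum_sub_distrib, hsum, p]
  have hvar : 2 * (1 - lam) * (1 - ∑ a, p a ^ 2) ≤
      2 * ∑ u, ∑ v, w u v * (if Y u ≠ Y v then (1 : ℝ) else 0) := by
    calc 2 * (1 - lam) * (1 - ∑ a, p a ^ 2)
        = ∑ a, 2 * (1 - lam) * (p a - p a ^ 2) := by
          rw [← mul_sum, sum_sub_distrib, hp_sum]
      _ ≤ ∑ a, ∑ u, ∑ v, w u v * (ind a u - ind a v) ^ 2 := by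
          refine sum_le_sum fun a _ => ?_
          have := two_mul_variance_le_dirichlet hsym hsum hlam (ind a)
          simpa only [hind_sq] using this
      _ = 2 * ∑ u, ∑ v, w u v * (if Y u ≠ Y v then (1 : ℝ) else 0) := by
          rw [sum_comm, mul_sum]
          refine sum_congr rfl fun u _ => ?_
          rw [sum_comm, mul_sum]
          refine sum_congr rfl fun v _ => ?_
          rw [← mul_sum, sum_sq_indicator_sub_indicator]
          by_cases h : Y u = Y v <;> simp [h, mul_comm]
  have hsq := sum_sq_le_mul_sum_of_forall_le hp_nonneg fun a => hmax a (mem_univ a)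
  rw [hp_sum, mul_one] at hsq
  rw [hmass]
  nlinarith

end SpectralGap

theorem inv_mul_eq_inv_mul_of_eq_mul {G : Type*} [Group G] {x y x' y' c : G}
    (hx : x = c * y) (hx' : x' = c * y') : x'⁻¹ * x = y'⁻¹ * y := by
  subst hx hx'
  group

theorem stmt3_general (m : ℕ) (V : Type) [Fintype V]
    (w : V → V → ℝ) (hw : ∀ u v, 0 ≤ w u v) (hsym : ∀ u v, w u v = w v u)
    (hsum : ∑ u, ∑ v, w u v = 1)
    (cst : V → V → Equiv.Perm (Fin m))
    (lam : ℝ) (hlam1 : lam < 1)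
    (hlam : ∀ f : V → ℝ, (∑ v, (∑ u, w v u) * f v) = 0 →
      (∑ u, ∑ v, w u v * f u * f v) ≤ lam * ∑ v, (∑ u, w v u) * (f v) ^ 2)
    (X X' : V → Equiv.Perm (Fin m)) :
    ∃ π₀ : Equiv.Perm (Fin m),
      (∑ v, (∑ u, w v u) * (if X v ≠ X' v * π₀ then (1 : ℝ) else 0)) ≤
        ((∑ u, ∑ v, w u v * (if X u ≠ cst u v * X v then (1 : ℝ) else 0)) +
          (∑ u, ∑ v, w u v * (if X' u ≠ cst u v * X' v then (1 : ℝ) else 0)))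
          / (1 - lam) := by
  obtain ⟨π₀, hπ₀⟩ := exists_stationary_mass_ne_le hw hsym hsum hlam1.le hlam
    fun v => (X' v)⁻¹ * X v
  refine ⟨π₀, ?_⟩
  have hedge : ∀ u v, (if (X' u)⁻¹ * X u ≠ (X' v)⁻¹ * X v then (1 : ℝ) else 0) ≤
      (if X u ≠ cst u v * X v then 1 else 0) + (if X' u ≠ cst u v * X' v then 1 else 0) := by
    intro u v
    split_ifs with hY hX hX' hX' <;> norm_num
    exact hY (inv_mul_eq_inv_mul_of_eq_mul (not_not.1 hX) (not_not.1 hX'))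
  have hrelabel : ∀ v, X v ≠ X' v * π₀ ↔ (X' v)⁻¹ * X v ≠ π₀ := fun v => by
    rw [ne_eq, ne_eq, inv_mul_eq_iff_eq_mul]
  simp only [hrelabel]
  rw [le_div_iff₀ (sub_pos.2 hlam1), mul_comm, ← sum_add_distrib]
  refine hπ₀.trans (sum_le_sum fun u _ => ?_)
  rw [← sum_add_distrib]
  exact sum_le_sum fun v _ => by
    rw [← mul_add]
    exact mul_le_mul_of_nonneg_left (hedge u v) (hw u v)

/-- Let `Φ = (G, Π)` be an affine Unique-Games instance over `S_m`
on a weighted graph `G` (symmetric edge distribution `w` of total mass `1`,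
stationary measure `μ v = ∑_u w v u`) whose normalized adjacency matrix has second
eigenvalue at most `λ < 1` (expressed via the quadratic form on mean-zero
functions).  For any two assignments `X, X' : V → S_m` there is `π₀ ∈ S_m` with
`Pr_{v∼μ}[X v ≠ X' v · π₀] ≤ (viol X + viol X')/(1 − λ)`. -/
theorem stmt3 (m : ℕ) (V : Type) [Fintype V]
    (w : V → V → ℝ) (hw : ∀ u v, 0 ≤ w u v) (hsym : ∀ u v, w u v = w v u)
    (hsum : ∑ u, ∑ v, w u v = 1)
    (cst : V → V → Equiv.Perm (Fin m)) (hcst : ∀ u v, cst u v = (cst v u)⁻¹)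
    (lam : ℝ) (hlam1 : lam < 1)
    (hlam : ∀ f : V → ℝ, (∑ v, (∑ u, w v u) * f v) = 0 →
      (∑ u, ∑ v, w u v * f u * f v) ≤ lam * ∑ v, (∑ u, w v u) * (f v) ^ 2)
    (X X' : V → Equiv.Perm (Fin m)) :
    ∃ π₀ : Equiv.Perm (Fin m),
      (∑ v, (∑ u, w v u) * (if X v ≠ X' v * π₀ then (1 : ℝ) else 0)) ≤
        ((∑ u, ∑ v, w u v * (if X u ≠ cst u v * X v then (1 : ℝ) else 0)) +
          (∑ u, ∑ v, w u v * (if X' u ≠ cst u v * X' v then (1 : ℝ) else 0)))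
          / (1 - lam) :=
  stmt3_general m V w hw hsym hsum cst lam hlam1 hlam X X'
end

section
/- Let μ be an ε-product distribution over X_1 × ... × X_r and let S_1, S_2, S_3 ⊆ [r] be three disjoint non-empty sets. Let T be the normalized adjacency operator of the tripartite graph T(S_1, S_2, S_3; μ). Then the second largest singular value of T is at most 1/2 + poly(r)·ε. -/
open scoped Classical

/-- The restriction of a point `x ∈ ∏ X i` to the coordinates in `S`. -/
def restrict {r : ℕ} {X : Fin r → Type} (S : Finset (Fin r)) (x : ∀ i, X i) :
    ∀ i : S, X i.1 := fun i => x i.1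

/-- The marginal mass of `μ` on the coordinates of `S` at the point `a`. -/
noncomputable def marg {r : ℕ} {X : Fin r → Type}
    (μ : (∀ i, X i) → ℝ) (S : Finset (Fin r)) (a : ∀ i : S, X i.1) : ℝ :=
  ∑ᶠ x : ∀ i, X i, if restrict S x = a then μ x else 0

/-- The conditional distribution `μ | X_S = a`. -/
noncomputable def condDist {r : ℕ} {X : Fin r → Type}
    (μ : (∀ i, X i) → ℝ) (S : Finset (Fin r)) (a : ∀ i : S, X i.1) :
    (∀ i, X i) → ℝ :=
  fun x => if restrict S x = a then μ x / marg μ S a else 0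

/-- The pair of coordinates `(i, j)` is `ε`-pseudorandom under `ν`: the second
singular value of the associated bipartite averaging operator is at most `ε`,
expressed as a bilinear bound over pairs of mean-zero test functions. -/
def IsPseudorandomPair {r : ℕ} {X : Fin r → Type}
    (ν : (∀ i, X i) → ℝ) (i j : Fin r) (ε : ℝ) : Prop :=
  ∀ (f : X i → ℝ) (g : X j → ℝ),
    (∑ᶠ x : ∀ i, X i, ν x * f (x i)) = 0 →
    (∑ᶠ x : ∀ i, X i, ν x * g (x j)) = 0 →
    |∑ᶠ x : ∀ i, X i, ν x * f (x i) * g (x j)| ≤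
      ε * Real.sqrt (∑ᶠ x : ∀ i, X i, ν x * (f (x i)) ^ 2) *
        Real.sqrt (∑ᶠ x : ∀ i, X i, ν x * (g (x j)) ^ 2)

/-- `μ` is an `ε`-product distribution: every conditioning on at most `r − 2`
coordinates has `ε`-pseudorandom skeletons. -/
def IsEpsProduct {r : ℕ} (X : Fin r → Type) (μ : (∀ i, X i) → ℝ) (ε : ℝ) : Prop :=
  ∀ S : Finset (Fin r), S.card ≤ r - 2 →
    ∀ a : ∀ i : S, X i.1, marg μ S a ≠ 0 →
      ∀ i j : Fin r, i ∉ S → j ∉ S → i ≠ j →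
        IsPseudorandomPair (condDist μ S a) i j ε

/-!
Write `f_k x = F ⟨k, x_{S_k}⟩` and `g_l x = G ⟨l, x_{S_l}⟩`. Each term `E[f_k g_l]` of the edge form
is the product of means `E f_k · E g_l` plus a covariance. Since `∑_k E f_k = 0`, the products of
means sum to `-∑_k E f_k · E g_k`, which is where `1/2` comes from after normalisation; the
covariances are small by the Gur–Lifshitz–Liu estimate: under any conditioning of `μ` on
coordinates outside the disjoint sets `L, R`, mean-zero `L`- and `R`-juntas have correlation at
most `|L| |R| ε`.

That estimate is proved by peeling a coordinate `j` off `R ∪ {j}` and conditioning on `x_R`. The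
correlation splits into the correlation of `E[f | x_R]` with `f` (an `(R, L)` instance, bounding
`‖E[f | x_R]‖`) and the fibrewise covariances, which are `(L, {j})` instances for `μ` conditioned
on `S ∪ R`. The base case `|L| = |R| = 1` is the ε-product hypothesis.
-/

open Finset hiding restrict

section WeightedSums

variable {Ω : Type*} [Fintype Ω] {w : Ω → ℝ}

theorem sq_sum_mul_mul_le (hw : ∀ x, 0 ≤ w x) (f g : Ω → ℝ) :
    (∑ x, w x * f x * g x) ^ 2 ≤ (∑ x, w x * f x ^ 2) * ∑ x, w x * g x ^ 2 :=
  sum_sq_le_sum_mul_sum_of_sq_le_mul _ (fun x _ => mul_nonneg (hw x) (sq_nonneg _))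
    (fun x _ => mul_nonneg (hw x) (sq_nonneg _)) fun x _ => le_of_eq (by ring)

theorem abs_sum_mul_mul_le (hw : ∀ x, 0 ≤ w x) (f g : Ω → ℝ) :
    |∑ x, w x * f x * g x| ≤ √(∑ x, w x * f x ^ 2) * √(∑ x, w x * g x ^ 2) := by
  rw [← Real.sqrt_mul (sum_nonneg fun x _ => mul_nonneg (hw x) (sq_nonneg _))]
  exact Real.abs_le_sqrt (sq_sum_mul_mul_le hw f g)

theorem sq_sum_mul_le (hw : ∀ x, 0 ≤ w x) (h1 : ∑ x, w x = 1) (f : Ω → ℝ) :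
    (∑ x, w x * f x) ^ 2 ≤ ∑ x, w x * f x ^ 2 := by
  simpa [h1] using sq_sum_mul_mul_le hw f 1

theorem sum_mul_sub_mean (h1 : ∑ x, w x = 1) (f : Ω → ℝ) :
    ∑ x, w x * (f x - ∑ y, w y * f y) = 0 := by
  simp only [mul_sub, sum_sub_distrib, ← sum_mul, h1, one_mul, sub_self]

theorem sum_mul_sub_mean_sq_le (h1 : ∑ x, w x = 1) (f : Ω → ℝ) :
    ∑ x, w x * (f x - ∑ y, w y * f y) ^ 2 ≤ ∑ x, w x * f x ^ 2 := by
  have expand : ∀ x, w x * (f x - ∑ y, w y * f y) ^ 2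
      = w x * f x ^ 2 - 2 * (∑ y, w y * f y) * (w x * f x) + (∑ y, w y * f y) ^ 2 * w x :=
    fun x => by ring
  simp only [expand, sum_add_distrib, sum_sub_distrib, ← mul_sum, h1]
  nlinarith [sq_nonneg (∑ y, w y * f y)]

theorem sum_mul_mul_eq_add_cov (h1 : ∑ x, w x = 1) (f g : Ω → ℝ) :
    ∑ x, w x * f x * g x = (∑ x, w x * f x) * (∑ x, w x * g x) +
      ∑ x, w x * (f x - ∑ y, w y * f y) * (g x - ∑ y, w y * g y) := by
  have expand : ∀ x, w x * (f x - ∑ y, w y * f y) * (g x - ∑ y, w y * g y)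
      = w x * f x * g x - (∑ y, w y * g y) * (w x * f x) - (∑ y, w y * f y) * (w x * g x)
        + (∑ y, w y * f y) * (∑ y, w y * g y) * w x :=
    fun x => by ring
  simp only [expand, sum_add_distrib, sum_sub_distrib, ← mul_sum, h1]
  ring

theorem abs_sum_mul_le_of_abs_le (hw : ∀ x, 0 ≤ w x) {c A B : Ω → ℝ} {K : ℝ} (hK : 0 ≤ K)
    (hA : ∀ x, 0 ≤ A x) (hB : ∀ x, 0 ≤ B x)
    (hc : ∀ x, w x ≠ 0 → |c x| ≤ K * √(A x) * √(B x)) :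
    |∑ x, w x * c x| ≤ K * √(∑ x, w x * A x) * √(∑ x, w x * B x) := by
  have hterm : ∀ x, |w x * c x| ≤ K * (w x * √(A x) * √(B x)) := by
    intro x
    rcases eq_or_ne (w x) 0 with h | h
    · simp [h]
    · rw [abs_mul, abs_of_nonneg (hw x)]
      nlinarith [hc x h, hw x]
  have hsq : ∀ (D : Ω → ℝ), (∀ x, 0 ≤ D x) → ∑ x, w x * √(D x) ^ 2 = ∑ x, w x * D x :=
    fun D hD => sum_congr rfl fun x _ => by rw [Real.sq_sqrt (hD x)]
  calc |∑ x, w x * c x| ≤ ∑ x, |w x * c x| := abs_sum_le_sum_abs _ _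
    _ ≤ K * ∑ x, w x * √(A x) * √(B x) := by
      rw [mul_sum]; exact sum_le_sum fun x _ => hterm x
    _ ≤ K * (√(∑ x, w x * A x) * √(∑ x, w x * B x)) := by
      gcongr
      rw [← hsq A hA, ← hsq B hB]
      exact (le_abs_self _).trans (abs_sum_mul_mul_le hw _ _)
    _ = _ := (mul_assoc _ _ _).symm

end WeightedSums

theorem sqrt_le_of_le_sqrt_mul {q c : ℝ} (hq : 0 ≤ q) (hc : 0 ≤ c) (h : q ≤ √q * c) :
    √q ≤ c := by
  rcases (Real.sqrt_nonneg q).eq_or_lt with h0 | hpos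
  · rw [← h0]; exact hc
  · refine le_of_mul_le_mul_left ?_ hpos
    rwa [Real.mul_self_sqrt hq]

section Conditioning

variable {r : ℕ} {X : Fin r → Type} {μ : (∀ i, X i) → ℝ} {S T : Finset (Fin r)}

theorem restrict_eq_of_condDist_ne_zero {a : ∀ i : S, X i.1} {x : ∀ i, X i}
    (h : condDist μ S a x ≠ 0) : restrict S x = a := by
  by_contra hx
  exact h (if_neg hx)

theorem restrict_union_eq_iff (x y : ∀ i, X i) :
    restrict (S ∪ T) y = restrict (S ∪ T) x ↔
      restrict S y = restrict S x ∧ restrict T y = restrict T x := by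
  simp only [funext_iff, restrict, Subtype.forall, mem_union]
  constructor
  · intro h
    exact ⟨fun i hi => h i (Or.inl hi), fun i hi => h i (Or.inr hi)⟩
  · rintro ⟨hS, hT⟩ i (hi | hi)
    exacts [hS i hi, hT i hi]

theorem condDist_of_marg_eq_zero {a : ∀ i : S, X i.1} (hm : marg μ S a = 0) :
    condDist μ S a = 0 := by
  funext x
  simp [condDist, hm]

variable [∀ i, Fintype (X i)]

theorem marg_eq_sum (μ : (∀ i, X i) → ℝ) (S : Finset (Fin r)) (a : ∀ i : S, X i.1) :
    marg μ S a = ∑ x, if restrict S x = a then μ x else 0 :=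
  finsum_eq_sum_of_fintype _

theorem marg_nonneg (hμ : ∀ x, 0 ≤ μ x) (a : ∀ i : S, X i.1) : 0 ≤ marg μ S a := by
  rw [marg_eq_sum]
  exact sum_nonneg fun x _ => by split_ifs <;> simp [hμ x]

theorem le_marg (hμ : ∀ x, 0 ≤ μ x) {a : ∀ i : S, X i.1} {x : ∀ i, X i}
    (h : restrict S x = a) : μ x ≤ marg μ S a := by
  rw [marg_eq_sum]
  simpa [h] using single_le_sum (f := fun y => if restrict S y = a then μ y else 0)
    (fun y _ => by split_ifs <;> simp [hμ y]) (mem_univ x)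

theorem condDist_nonneg (hμ : ∀ x, 0 ≤ μ x) (a : ∀ i : S, X i.1) (x : ∀ i, X i) :
    0 ≤ condDist μ S a x := by
  unfold condDist
  split_ifs
  exacts [div_nonneg (hμ x) (marg_nonneg hμ a), le_rfl]

theorem sum_condDist {a : ∀ i : S, X i.1} (hm : marg μ S a ≠ 0) :
    ∑ x, condDist μ S a x = 1 := by
  have h : ∀ x, condDist μ S a x = (if restrict S x = a then μ x else 0) / marg μ S a :=
    fun x => by rw [condDist, ite_div, zero_div]
  rw [sum_congr rfl fun x _ => h x, ← sum_div, ← marg_eq_sum, div_self hm]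

theorem marg_mul_condDist (hμ : ∀ x, 0 ≤ μ x) (a : ∀ i : S, X i.1) (x : ∀ i, X i) :
    marg μ S a * condDist μ S a x = if restrict S x = a then μ x else 0 := by
  unfold condDist
  split_ifs with h
  · rcases eq_or_ne (marg μ S a) 0 with hm | hm
    · simp [hm, le_antisymm (hm ▸ le_marg hμ h) (hμ x)]
    · exact mul_div_cancel₀ _ hm
  · exact mul_zero _

noncomputable def condMean (μ : (∀ i, X i) → ℝ) (T : Finset (Fin r)) (φ : (∀ i, X i) → ℝ)
    (V : ∀ i : T, X i.1) : ℝ :=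
  ∑ x, condDist μ T V x * φ x

theorem sum_mul_comp_restrict_mul (hμ : ∀ x, 0 ≤ μ x) (ψ : (∀ i : T, X i.1) → ℝ)
    (φ : (∀ i, X i) → ℝ) :
    ∑ x, μ x * (ψ (restrict T x) * φ x) = ∑ V, marg μ T V * (ψ V * condMean μ T φ V) := by
  have fiber : ∀ V, marg μ T V * (ψ V * condMean μ T φ V)
      = ∑ x, if restrict T x = V then μ x * (ψ (restrict T x) * φ x) else 0 := by
    intro V
    simp only [condMean, mul_sum]
    refine sum_congr rfl fun x _ => ?_
    rw [show marg μ T V * (ψ V * (condDist μ T V x * φ x))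
      = ψ V * φ x * (marg μ T V * condDist μ T V x) by ring, marg_mul_condDist hμ]
    split_ifs with h
    · rw [h]; ring
    · simp
  simp only [fiber]
  rw [sum_comm]
  simp

theorem sum_mul_eq_sum_marg_mul_condMean (hμ : ∀ x, 0 ≤ μ x) (T : Finset (Fin r))
    (φ : (∀ i, X i) → ℝ) : ∑ x, μ x * φ x = ∑ V, marg μ T V * condMean μ T φ V := by
  simpa using sum_mul_comp_restrict_mul hμ (T := T) 1 φ

theorem condDist_condDist (hμ : ∀ x, 0 ≤ μ x) {U : Finset (Fin r)} {a : ∀ i : S, X i.1}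
    {b : ∀ i : T, X i.1} {c : ∀ i : U, X i.1}
    (hc : ∀ y, restrict U y = c ↔ restrict S y = a ∧ restrict T y = b) :
    condDist (condDist μ S a) T b = condDist μ U c := by
  have hmarg : marg (condDist μ S a) T b = marg μ U c / marg μ S a := by
    rw [marg_eq_sum, marg_eq_sum μ U c, sum_div]
    refine sum_congr rfl fun y _ => ?_
    by_cases h1 : restrict S y = a <;> by_cases h2 : restrict T y = b <;>
      simp [condDist, h1, h2, hc]
  funext y
  simp only [condDist, hmarg, hc]
  by_cases h1 : restrict S y = a <;> by_cases h2 : restrict T y = b <;>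
    simp only [h1, h2, and_self, and_false, false_and, if_true, if_false, zero_div]
  rcases eq_or_ne (marg μ S a) 0 with hS | hS
  · simp [hS, le_antisymm (hS ▸ le_marg hμ h1) (hμ y)]
  · rw [div_div_div_cancel_right₀ hS]

theorem condDist_empty (h1 : ∑ x, μ x = 1) (a : ∀ i : (∅ : Finset (Fin r)), X i.1) :
    condDist μ ∅ a = μ := by
  have hres : ∀ x : ∀ i, X i, restrict ∅ x = a := fun x => funext fun i => (notMem_empty _ i.2).elim
  have hmarg : marg μ ∅ a = 1 := by simp [marg_eq_sum, hres, h1]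
  funext x
  simp [condDist, hres, hmarg]

theorem exists_restrict_eq_of_marg_ne_zero {a : ∀ i : S, X i.1} (hm : marg μ S a ≠ 0) :
    ∃ x, restrict S x = a ∧ μ x ≠ 0 := by
  rw [marg_eq_sum] at hm
  obtain ⟨x, -, hx⟩ := exists_ne_zero_of_sum_ne_zero hm
  by_cases h : restrict S x = a
  · exact ⟨x, h, by simpa [h] using hx⟩
  · simp [h] at hx

theorem sum_mul_comp_restrict (ψ : (∀ i : T, X i.1) → ℝ) :
    ∑ x, μ x * ψ (restrict T x) = ∑ V, marg μ T V * ψ V := by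
  simp only [marg_eq_sum, sum_mul, ite_mul, zero_mul]
  rw [sum_comm]
  simp

theorem sum_mul_mul_eq_sum_marg_add_cov (hμ : ∀ x, 0 ≤ μ x) (T : Finset (Fin r))
    (f g : (∀ i, X i) → ℝ) :
    ∑ x, μ x * f x * g x = ∑ V, marg μ T V * condMean μ T f V * condMean μ T g V +
      ∑ V, marg μ T V * ∑ x, condDist μ T V x * (f x - condMean μ T f V) *
        (g x - condMean μ T g V) := by
  simp only [mul_assoc, sum_mul_eq_sum_marg_mul_condMean hμ T (fun x => f x * g x),
    ← sum_add_distrib, ← mul_add]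
  refine sum_congr rfl fun V _ => ?_
  rcases eq_or_ne (marg μ T V) 0 with hm | hm
  · simp [hm]
  · congr 1
    simpa only [condMean, mul_assoc] using sum_mul_mul_eq_add_cov (sum_condDist hm) f g

theorem sum_marg_mul_condMean_sq_le (hμ : ∀ x, 0 ≤ μ x) (T : Finset (Fin r))
    (φ : (∀ i, X i) → ℝ) :
    ∑ V, marg μ T V * condMean μ T φ V ^ 2 ≤ ∑ x, μ x * φ x ^ 2 := by
  rw [sum_mul_eq_sum_marg_mul_condMean hμ T]
  refine sum_le_sum fun V _ => ?_
  rcases eq_or_ne (marg μ T V) 0 with hm | hm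
  · simp [hm]
  · exact mul_le_mul_of_nonneg_left
      (sq_sum_mul_le (condDist_nonneg hμ V) (sum_condDist hm) φ) (marg_nonneg hμ V)

end Conditioning

section Juntas

variable {r : ℕ} {X : Fin r → Type}

def IsJunta (L : Finset (Fin r)) (f : (∀ i, X i) → ℝ) : Prop :=
  ∀ x y : ∀ i, X i, (∀ i ∈ L, x i = y i) → f x = f y

variable {L L' : Finset (Fin r)} {f : (∀ i, X i) → ℝ}

theorem IsJunta.mono (hf : IsJunta L f) (h : L ⊆ L') : IsJunta L' f :=
  fun x y hxy => hf x y fun i hi => hxy i (h hi)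

theorem IsJunta.sub_const (hf : IsJunta L f) (c : ℝ) : IsJunta L (fun x => f x - c) :=
  fun x y hxy => show f x - c = f y - c by rw [hf x y hxy]

theorem isJunta_comp_restrict (ψ : (∀ i : L, X i.1) → ℝ) :
    IsJunta L (fun x => ψ (restrict L x)) :=
  fun _ _ hxy => congrArg ψ (funext fun i => hxy i i.2)

theorem IsJunta.exists_sdiff_eq_on_fiber (hf : IsJunta L f) (T : Finset (Fin r))
    (x₀ : ∀ i, X i) :
    ∃ f' : (∀ i, X i) → ℝ, IsJunta (L \ T) f' ∧ ∀ x, restrict T x = restrict T x₀ → f' x = f x := by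
  refine ⟨fun x => f (T.piecewise x₀ x), fun x y hxy => hf _ _ fun i hi => ?_,
    fun x hx => congrArg f (funext fun i => ?_)⟩
  · by_cases hiT : i ∈ T
    · simp [hiT]
    · simp [hiT, hxy i (mem_sdiff.mpr ⟨hi, hiT⟩)]
  · by_cases hiT : i ∈ T
    · rw [piecewise_eq_of_mem _ _ _ hiT]
      exact (congrFun hx ⟨i, hiT⟩).symm
    · simp [hiT]

theorem IsJunta.exists_eq_comp_eval {i : Fin r} (hf : IsJunta {i} f) (x₀ : ∀ i, X i) :
    ∃ f₁ : X i → ℝ, ∀ x, f x = f₁ (x i) :=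
  ⟨fun b => f (Function.update x₀ i b),
    fun x => hf _ _ fun k hk => by rw [mem_singleton.mp hk, Function.update_self]⟩

end Juntas

section CorrBound

variable {r : ℕ} {X : Fin r → Type} [∀ i, Fintype (X i)] {μ : (∀ i, X i) → ℝ}
  {L R : Finset (Fin r)} {c c₁ c₂ : ℝ}

/-- Every conditioning `μ | X_S = a` with `S` disjoint from `L` and `R` makes the bipartite
operator `A_{L,R}` have second singular value at most `c`. -/
def CorrBound (μ : (∀ i, X i) → ℝ) (L R : Finset (Fin r)) (c : ℝ) : Prop :=
  ∀ (S : Finset (Fin r)) (a : ∀ i : S, X i.1) (f g : (∀ i, X i) → ℝ),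
    Disjoint S L → Disjoint S R → IsJunta L f → IsJunta R g →
    ∑ x, condDist μ S a x * f x = 0 → ∑ x, condDist μ S a x * g x = 0 →
    |∑ x, condDist μ S a x * f x * g x| ≤
      c * √(∑ x, condDist μ S a x * f x ^ 2) * √(∑ x, condDist μ S a x * g x ^ 2)

theorem CorrBound.mono (h : CorrBound μ L R c₁) (hc : c₁ ≤ c₂) : CorrBound μ L R c₂ :=
  fun S a f g hSL hSR hf hg hf0 hg0 => (h S a f g hSL hSR hf hg hf0 hg0).trans (by gcongr)

theorem CorrBound.symm (h : CorrBound μ L R c) : CorrBound μ R L c := by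
  intro S a f g hSR hSL hf hg hf0 hg0
  have := h S a g f hSL hSR hg hf hg0 hf0
  simp only [mul_right_comm _ (g _) (f _)] at this
  linarith

theorem corrBound_empty_left : CorrBound μ ∅ R 0 := by
  intro S a f g _ _ hf _ _ hg0
  rcases isEmpty_or_nonempty (∀ i, X i) with hΩ | hΩ
  · simp
  · obtain ⟨x₀⟩ := hΩ
    rw [sum_congr rfl fun x _ => by rw [hf x x₀ (by simp), mul_right_comm], ← sum_mul, hg0]
    simp

theorem card_le_sub_two_of_disjoint {S : Finset (Fin r)} {i j : Fin r} (hij : i ≠ j)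
    (hi : i ∉ S) (hj : j ∉ S) : S.card ≤ r - 2 := by
  have hsub : S ⊆ ({i, j} : Finset (Fin r))ᶜ := fun k hk => by
    simp only [mem_compl, mem_insert, mem_singleton]
    rintro (rfl | rfl) <;> contradiction
  have := card_le_card hsub
  rwa [card_compl, card_pair hij, Fintype.card_fin] at this

theorem corrBound_singleton {ε : ℝ} (hprod : IsEpsProduct X μ ε) {i j : Fin r} (hij : i ≠ j) :
    CorrBound μ {i} {j} ε := by
  intro S a f g hSi hSj hf hg hf0 hg0
  rw [disjoint_singleton_right] at hSi hSj
  by_cases hm : marg μ S a = 0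
  · simp [condDist_of_marg_eq_zero hm]
  obtain ⟨x₀, -⟩ := exists_restrict_eq_of_marg_ne_zero hm
  obtain ⟨f₁, hf₁⟩ := hf.exists_eq_comp_eval x₀
  obtain ⟨g₁, hg₁⟩ := hg.exists_eq_comp_eval x₀
  have h := hprod S (card_le_sub_two_of_disjoint hij hSi hSj) a hm i j hSi hSj hij f₁ g₁
  simp only [finsum_eq_sum_of_fintype, ← hf₁, ← hg₁] at h
  exact h hf0 hg0

theorem CorrBound.abs_condCov_le (hμ : ∀ x, 0 ≤ μ x) {j : Fin r} (h₂ : CorrBound μ L {j} c₂)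
    (hc₂ : 0 ≤ c₂) {S : Finset (Fin r)} (hSL : Disjoint S L) (hSj : j ∉ S) (hRL : Disjoint R L)
    (hj : j ∉ R) {a : ∀ i : S, X i.1} {f g : (∀ i, X i) → ℝ} (hf : IsJunta L f)
    (hg : IsJunta (insert j R) g) {V : ∀ i : R, X i.1} (hV : marg (condDist μ S a) R V ≠ 0) :
    |∑ x, condDist (condDist μ S a) R V x * (f x - condMean (condDist μ S a) R f V) *
        (g x - condMean (condDist μ S a) R g V)| ≤
      c₂ * √(condMean (condDist μ S a) R (fun x => f x ^ 2) V) *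
        √(condMean (condDist μ S a) R (fun x => g x ^ 2) V) := by
  set ν := condDist μ S a
  set w := condDist ν R V
  obtain ⟨x₀, hx₀R, hx₀⟩ := exists_restrict_eq_of_marg_ne_zero hV
  have hw : w = condDist μ (S ∪ R) (restrict (S ∪ R) x₀) := condDist_condDist hμ fun y => by
    rw [restrict_union_eq_iff, restrict_eq_of_condDist_ne_zero hx₀, hx₀R]
  have hw1 : ∑ x, w x = 1 := sum_condDist hV
  obtain ⟨g', hg', hg'g⟩ := hg.exists_sdiff_eq_on_fiber R x₀
  replace hg' : IsJunta {j} g' := hg'.mono fun i => by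
    simp only [mem_sdiff, mem_insert, mem_singleton]
    tauto
  have hsupp : ∀ x, w x = 0 ∨ g' x = g x := fun x => (eq_or_ne _ _).imp_right fun hx =>
    hg'g x ((restrict_eq_of_condDist_ne_zero hx).trans hx₀R.symm)
  have hG : condMean ν R g V = ∑ x, w x * g' x :=
    show ∑ x, w x * g x = _ from sum_congr rfl fun x _ => by rcases hsupp x with h | h <;> simp [h]
  have h := h₂ (S ∪ R) (restrict (S ∪ R) x₀) _ _ (disjoint_union_left.2 ⟨hSL, hRL⟩)
    (disjoint_singleton_right.2 (by simp [hSj, hj])) (hf.sub_const (condMean ν R f V))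
    (hg'.sub_const (condMean ν R g V)) (by rw [← hw]; exact sum_mul_sub_mean hw1 f)
    (by rw [← hw, hG]; exact sum_mul_sub_mean hw1 g')
  rw [← hw] at h
  calc _ = |∑ x, w x * (f x - condMean ν R f V) * (g' x - condMean ν R g V)| := by
        congr 1
        exact sum_congr rfl fun x _ => by rcases hsupp x with h | h <;> simp [h]
    _ ≤ _ := h
    _ ≤ _ := by
      have hvar : ∑ x, w x * (g' x - condMean ν R g V) ^ 2
          = ∑ x, w x * (g x - condMean ν R g V) ^ 2 :=
        sum_congr rfl fun x _ => by rcases hsupp x with h | h <;> simp [h]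
      rw [hvar]
      gcongr
      exacts [sum_mul_sub_mean_sq_le hw1 f, sum_mul_sub_mean_sq_le hw1 g]

theorem CorrBound.sqrt_sum_marg_mul_condMean_sq_le (hμ : ∀ x, 0 ≤ μ x) (h₁ : CorrBound μ R L c₁)
    (hc₁ : 0 ≤ c₁) {S : Finset (Fin r)} (hSR : Disjoint S R) (hSL : Disjoint S L)
    {a : ∀ i : S, X i.1} {f : (∀ i, X i) → ℝ} (hf : IsJunta L f)
    (hf0 : ∑ x, condDist μ S a x * f x = 0) :
    √(∑ V, marg (condDist μ S a) R V * condMean (condDist μ S a) R f V ^ 2) ≤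
      c₁ * √(∑ x, condDist μ S a x * f x ^ 2) := by
  set ν := condDist μ S a
  have hν := condDist_nonneg hμ a
  set F := condMean ν R f
  have hFf : ∑ x, ν x * F (restrict R x) * f x = ∑ V, marg ν R V * F V ^ 2 := by
    simp only [mul_assoc]
    rw [sum_mul_comp_restrict_mul hν F f]
    simp only [sq]
    rfl
  have hFF : ∑ x, ν x * F (restrict R x) ^ 2 = ∑ V, marg ν R V * F V ^ 2 :=
    sum_mul_comp_restrict fun V => F V ^ 2
  have hF0 : ∑ x, ν x * F (restrict R x) = 0 := by
    rw [sum_mul_comp_restrict F, ← sum_mul_eq_sum_marg_mul_condMean hν, hf0]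
  have h := h₁ S a _ f hSR hSL (isJunta_comp_restrict F) hf hF0 hf0
  rw [hFf, hFF] at h
  exact sqrt_le_of_le_sqrt_mul (sum_nonneg fun V _ => mul_nonneg (marg_nonneg hν V) (sq_nonneg _))
    (by positivity) ((le_abs_self _).trans (h.trans_eq (by ring)))

theorem CorrBound.insert (hμ : ∀ x, 0 ≤ μ x) {j : Fin r} (h₁ : CorrBound μ R L c₁)
    (h₂ : CorrBound μ L {j} c₂) (hc₁ : 0 ≤ c₁) (hc₂ : 0 ≤ c₂) (hj : j ∉ R)
    (hL : Disjoint L (insert j R)) : CorrBound μ L (insert j R) (c₁ + c₂) := by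
  intro S a f g hSL hS hf hg hf0 _
  rw [disjoint_insert_right] at hL hS
  set ν := condDist μ S a
  have hν := condDist_nonneg hμ a
  have hmoment : ∀ φ : (∀ i, X i) → ℝ, ∀ V, 0 ≤ condMean ν R (fun x => φ x ^ 2) V :=
    fun φ V => sum_nonneg fun x _ => mul_nonneg (condDist_nonneg hν V x) (sq_nonneg _)
  have hcov := abs_sum_mul_le_of_abs_le (marg_nonneg hν) hc₂ (hmoment f) (hmoment g)
    fun V hV => h₂.abs_condCov_le hμ hc₂ hSL hS.1 hL.2.symm hj hf hg hV
  rw [← sum_mul_eq_sum_marg_mul_condMean hν, ← sum_mul_eq_sum_marg_mul_condMean hν] at hcov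
  have hmain := h₁.sqrt_sum_marg_mul_condMean_sq_le hμ hc₁ hS.2 hSL hf hf0
  have hG := Real.sqrt_le_sqrt (sum_marg_mul_condMean_sq_le hν R g)
  rw [sum_mul_mul_eq_sum_marg_add_cov hν R]
  calc _ ≤ _ := abs_add_le _ _
    _ ≤ _ := add_le_add (abs_sum_mul_mul_le (marg_nonneg hν) _ _) hcov
    _ ≤ c₁ * √(∑ x, ν x * f x ^ 2) * √(∑ x, ν x * g x ^ 2) +
        c₂ * √(∑ x, ν x * f x ^ 2) * √(∑ x, ν x * g x ^ 2) := by gcongr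
    _ = _ := by ring

end CorrBound

section EpsProduct

variable {r : ℕ} {X : Fin r → Type} [∀ i, Fintype (X i)] {μ : (∀ i, X i) → ℝ} {ε : ℝ}

theorem corrBound_singleton_right (hμ : ∀ x, 0 ≤ μ x) (hε : 0 ≤ ε) (hprod : IsEpsProduct X μ ε)
    {j : Fin r} {L : Finset (Fin r)} (hj : j ∉ L) : CorrBound μ L {j} (L.card * ε) := by
  induction L using Finset.induction_on with
  | empty => exact corrBound_empty_left.mono (by simp)
  | insert i L hi ih =>
    rw [mem_insert, not_or] at hj
    refine (CorrBound.insert hμ (ih hj.2) (corrBound_singleton hprod hj.1) (by positivity) hε hi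
      (disjoint_singleton_left.2 (by simp [hj.1, hj.2]))).symm.mono (le_of_eq ?_)
    rw [card_insert_of_notMem hi]
    push_cast
    ring

theorem corrBound_of_isEpsProduct (hμ : ∀ x, 0 ≤ μ x) (hε : 0 ≤ ε) (hprod : IsEpsProduct X μ ε)
    {L R : Finset (Fin r)} (hLR : Disjoint L R) : CorrBound μ L R (L.card * R.card * ε) := by
  induction R using Finset.induction_on with
  | empty => exact corrBound_empty_left.symm.mono (by simp)
  | insert j R hj ih =>
    have hjL : j ∉ L := disjoint_right.1 hLR (mem_insert_self j R)
    refine (CorrBound.insert hμ (ih (hLR.mono_right (subset_insert j R))).symm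
      (corrBound_singleton_right hμ hε hprod hjL) (by positivity) (by positivity) hj hLR).mono
      (le_of_eq ?_)
    rw [card_insert_of_notMem hj]
    push_cast
    ring

theorem abs_sum_cov_le_of_isEpsProduct (hμ : ∀ x, 0 ≤ μ x) (h1 : ∑ x, μ x = 1) (hε : 0 ≤ ε)
    (hprod : IsEpsProduct X μ ε) {L R : Finset (Fin r)} (hLR : Disjoint L R)
    {f g : (∀ i, X i) → ℝ} (hf : IsJunta L f) (hg : IsJunta R g) :
    |∑ x, μ x * (f x - ∑ y, μ y * f y) * (g x - ∑ y, μ y * g y)| ≤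
      L.card * R.card * ε * √(∑ x, μ x * f x ^ 2) * √(∑ x, μ x * g x ^ 2) := by
  have h := corrBound_of_isEpsProduct hμ hε hprod hLR ∅ (fun i => (notMem_empty _ i.2).elim)
    (fun x => f x - ∑ y, μ y * f y) (fun x => g x - ∑ y, μ y * g y) (disjoint_empty_left L)
    (disjoint_empty_left R) (hf.sub_const _) (hg.sub_const _)
  simp only [condDist_empty h1, sum_mul_sub_mean h1, forall_const] at h
  refine h.trans ?_
  gcongr _ * √?_ * √?_
  exacts [sum_mul_sub_mean_sq_le h1 f, sum_mul_sub_mean_sq_le h1 g]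

end EpsProduct

section OffDiagonal

variable {ι Ω : Type*} [Fintype ι] [Fintype Ω]

theorem sum_sqrt_le_sqrt_card_mul {A : ι → ℝ} (hA : ∀ k, 0 ≤ A k) :
    ∑ k, √(A k) ≤ √(Fintype.card ι) * √(∑ k, A k) := by
  rw [← Real.sqrt_mul (Nat.cast_nonneg _)]
  apply Real.le_sqrt_of_sq_le
  simpa [Real.sq_sqrt (hA _)] using sq_sum_le_card_mul_sum_sq (s := univ) (f := fun k => √(A k))

variable [DecidableEq ι]

theorem sum_offDiag_mul_eq (a b : ι → ℝ) :
    ∑ k, ∑ l, (if k ≠ l then a k * b l else 0) = (∑ k, a k) * (∑ l, b l) - ∑ k, a k * b k := by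
  have h : ∀ k l, (if k ≠ l then a k * b l else 0) = a k * b l - if k = l then a k * b l else 0 :=
    fun k l => by split_ifs <;> simp_all
  simp only [h, sum_sub_distrib, sum_ite_eq, mem_univ, if_true, sum_mul_sum]

theorem abs_sum_offDiag_le {μ : Ω → ℝ} (hμ : ∀ x, 0 ≤ μ x) (h1 : ∑ x, μ x = 1)
    (f g : ι → Ω → ℝ) (hf : ∑ x, μ x * ∑ k, f k x = 0) {δ : ℝ} (hδ : 0 ≤ δ)
    (hcov : ∀ k l, k ≠ l →
      |∑ x, μ x * (f k x - ∑ y, μ y * f k y) * (g l x - ∑ y, μ y * g l y)| ≤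
        δ * √(∑ x, μ x * f k x ^ 2) * √(∑ x, μ x * g l x ^ 2)) :
    |∑ x, μ x * ∑ k, ∑ l, (if k ≠ l then f k x * g l x else 0)| ≤
      (1 + Fintype.card ι * δ) * √(∑ x, μ x * ∑ k, f k x ^ 2) *
        √(∑ x, μ x * ∑ k, g k x ^ 2) := by
  have hswap : ∀ H : ι → Ω → ℝ, ∑ x, μ x * ∑ k, H k x = ∑ k, ∑ x, μ x * H k x :=
    fun H => by simp only [mul_sum]; exact sum_comm
  set a := fun k => ∑ x, μ x * f k x
  set b := fun l => ∑ x, μ x * g l x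
  set cov := fun k l => ∑ x, μ x * (f k x - a k) * (g l x - b l)
  set A := fun k => ∑ x, μ x * f k x ^ 2
  set B := fun l => ∑ x, μ x * g l x ^ 2
  have hA : ∀ k, 0 ≤ A k := fun k => sum_nonneg fun x _ => mul_nonneg (hμ x) (sq_nonneg _)
  have hB : ∀ l, 0 ≤ B l := fun l => sum_nonneg fun x _ => mul_nonneg (hμ x) (sq_nonneg _)
  have hdecomp : ∑ x, μ x * ∑ k, ∑ l, (if k ≠ l then f k x * g l x else 0) =
      ∑ k, ∑ l, (if k ≠ l then a k * b l else 0) + ∑ k, ∑ l, (if k ≠ l then cov k l else 0) := by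
    simp only [hswap, ← sum_add_distrib]
    refine sum_congr rfl fun k _ => sum_congr rfl fun l _ => ?_
    by_cases hkl : k ≠ l
    · simp only [if_pos hkl, ← mul_assoc]
      exact sum_mul_mul_eq_add_cov h1 (f k) (g l)
    · simp [hkl]
  have hdiag : |∑ k, a k * b k| ≤ √(∑ k, A k) * √(∑ k, B k) := by
    have hcs := abs_sum_mul_mul_le (w := fun _ : ι => (1 : ℝ)) (fun _ => zero_le_one) a b
    simp only [one_mul] at hcs
    refine hcs.trans ?_
    gcongr with k _ k _
    exacts [sq_sum_mul_le hμ h1 (f k), sq_sum_mul_le hμ h1 (g k)]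
  have hoff : |∑ k, ∑ l, (if k ≠ l then cov k l else 0)| ≤
      Fintype.card ι * δ * √(∑ k, A k) * √(∑ k, B k) := by
    have hterm : ∀ k l, |if k ≠ l then cov k l else 0| ≤ δ * (√(A k) * √(B l)) := fun k l => by
      split_ifs with hkl
      · exact (hcov k l hkl).trans_eq (mul_assoc _ _ _)
      · simp only [abs_zero]; positivity
    calc _ ≤ ∑ k, ∑ l, |if k ≠ l then cov k l else 0| :=
          (abs_sum_le_sum_abs _ _).trans (sum_le_sum fun k _ => abs_sum_le_sum_abs _ _)
      _ ≤ ∑ k, ∑ l, δ * (√(A k) * √(B l)) := by gcongr with k _ l _; exact hterm k l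
      _ = δ * ((∑ k, √(A k)) * ∑ l, √(B l)) := by simp only [← mul_sum, sum_mul_sum]
      _ ≤ δ * ((√(Fintype.card ι) * √(∑ k, A k)) * (√(Fintype.card ι) * √(∑ k, B k))) := by
          gcongr
          exacts [sum_sqrt_le_sqrt_card_mul hA, sum_sqrt_le_sqrt_card_mul hB]
      _ = _ := by
          rw [mul_mul_mul_comm, Real.mul_self_sqrt (Nat.cast_nonneg _)]
          ring
  have hsa : ∑ k, a k = 0 := by rw [← hf, hswap]
  rw [hdecomp, sum_offDiag_mul_eq, hsa, zero_mul, zero_sub, hswap, hswap]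
  calc _ ≤ _ := abs_add_le _ _
    _ ≤ √(∑ k, A k) * √(∑ k, B k) + Fintype.card ι * δ * √(∑ k, A k) * √(∑ k, B k) := by
        rw [abs_neg]; exact add_le_add hdiag hoff
    _ = _ := by ring

end OffDiagonal

theorem abs_one_sixth_mul_le {T A B t : ℝ} (ht : 0 ≤ t) (h : |T| ≤ (1 + 3 * t) * √A * √B) :
    |1 / 6 * T| ≤ (1 / 2 + 2 * t) * √(1 / 3 * A) * √(1 / 3 * B) := by
  rw [abs_mul, abs_of_pos (by norm_num), Real.sqrt_mul (by norm_num), Real.sqrt_mul (by norm_num)]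
  have hts : 0 ≤ t * (√A * √B) := by positivity
  calc _ ≤ 1 / 6 * ((1 + 3 * t) * (√A * √B)) := by gcongr; rwa [← mul_assoc]
    _ ≤ (1 / 2 + 2 * t) * (√(1 / 3) * √(1 / 3)) * (√A * √B) := by
      rw [Real.mul_self_sqrt (by norm_num)]; nlinarith
    _ = _ := by ring

/-- There is `C > 0` such that: if `μ` is an `ε`-product
distribution over `X_1 × ⋯ × X_r` and `S_1, S_2, S_3 ⊆ [r]` are disjoint nonempty
sets, then the second largest singular value of the normalized adjacency operator
of the tripartite graph `T(S_1, S_2, S_3; μ)` is at most `1/2 + poly(r)·ε`,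
expressed as a bilinear bound over mean-zero functions `F, G` on the vertex set
`Σ k, supp(μ^{S_k})` (with stationary measure `(1/3)·marginal`, and edge
distribution sampling `x ∼ μ` and a uniform ordered pair `k ≠ l`). -/
theorem stmt5 : ∃ C : ℝ, 0 < C ∧
    ∀ (r : ℕ) (X : Fin r → Type) [∀ i, Fintype (X i)]
      (μ : (∀ i, X i) → ℝ), (∀ x, 0 ≤ μ x) → (∑ᶠ x : ∀ i, X i, μ x) = 1 →
      ∀ ε : ℝ, 0 ≤ ε → IsEpsProduct X μ ε →
      ∀ S : Fin 3 → Finset (Fin r),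
        (∀ k l, k ≠ l → Disjoint (S k) (S l)) → (∀ k, (S k).Nonempty) →
      ∀ F G : (Σ k : Fin 3, ∀ i : S k, X i.1) → ℝ,
        (∑ᶠ x : ∀ i, X i, μ x * ∑ k : Fin 3, F ⟨k, restrict (S k) x⟩) = 0 →
        (∑ᶠ x : ∀ i, X i, μ x * ∑ k : Fin 3, G ⟨k, restrict (S k) x⟩) = 0 →
        |(1 / 6 : ℝ) * ∑ᶠ x : ∀ i, X i, μ x * ∑ k : Fin 3, ∑ l : Fin 3,
            (if k ≠ l then F ⟨k, restrict (S k) x⟩ * G ⟨l, restrict (S l) x⟩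
              else 0)| ≤
          (1 / 2 + C * (r : ℝ) ^ C * ε) *
            Real.sqrt ((1 / 3 : ℝ) *
              ∑ᶠ x : ∀ i, X i, μ x * ∑ k : Fin 3, (F ⟨k, restrict (S k) x⟩) ^ 2) *
            Real.sqrt ((1 / 3 : ℝ) *
              ∑ᶠ x : ∀ i, X i, μ x * ∑ k : Fin 3, (G ⟨k, restrict (S k) x⟩) ^ 2) := by
  refine ⟨2, two_pos, fun r X _ μ hμ h1 ε hε hprod S hS _ F G hF _ => ?_⟩
  simp only [finsum_eq_sum_of_fintype] at h1 hF ⊢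
  have hcard : ∀ k, ((S k).card : ℝ) ≤ r := fun k => by
    exact_mod_cast (card_le_univ (S k)).trans_eq (Fintype.card_fin r)
  have h := abs_sum_offDiag_le hμ h1 _ _ hF (by positivity) fun k l hkl =>
    (abs_sum_cov_le_of_isEpsProduct hμ h1 hε hprod (hS k l hkl)
      (isJunta_comp_restrict fun V => F ⟨k, V⟩) (isJunta_comp_restrict fun V => G ⟨l, V⟩)).trans
      (by gcongr; nlinarith [hcard k, hcard l] : _ ≤ (r : ℝ) ^ 2 * ε * _ * _)
  rw [Fintype.card_fin, Nat.cast_ofNat] at h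
  rw [Real.rpow_two]
  exact (abs_one_sixth_mul_le (by positivity) h).trans_eq (by ring)
end

section
/- Let ω be the standard symplectic form on F_q^{2d}. Given isotropic subspaces W_1, W_2 ⊆ F_q^{2d} with dim(W_1) = d_0 − k and dim(W_2) = d_0 where d_0 ≤ d, there exists a k-dimensional isotropic subspace W ⊆ W_2 with W ∩ (W_1 ∩ W_2) = {0} such that W + W_1 is a d_0-dimensional isotropic subspace. -/
open Module

/-- The standard symplectic form on `F^{2d}`. -/
def sympForm (F : Type) [Field F] (d : ℕ) (x y : (Fin d ⊕ Fin d) → F) : F :=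
  ∑ i : Fin d, (x (Sum.inl i) * y (Sum.inr i) - x (Sum.inr i) * y (Sum.inl i))

/-- A subspace is isotropic if the symplectic form vanishes identically on it. -/
def IsIsotropic (F : Type) [Field F] (d : ℕ)
    (W : Submodule F ((Fin d ⊕ Fin d) → F)) : Prop :=
  ∀ x ∈ W, ∀ y ∈ W, sympForm F d x y = 0

noncomputable def sympBil (F : Type) [Field F] (d : ℕ) :
    ((Fin d ⊕ Fin d) → F) →ₗ[F] ((Fin d ⊕ Fin d) → F) →ₗ[F] F :=
  LinearMap.mk₂ F (sympForm F d)
    (fun x y z => by simp only [sympForm, Pi.add_apply, ← Finset.sum_add_distrib]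
                     exact Finset.sum_congr rfl fun i _ => by ring)
    (fun c x y => by simp only [sympForm, Pi.smul_apply, smul_eq_mul, Finset.mul_sum]
                     exact Finset.sum_congr rfl fun i _ => by ring)
    (fun x y z => by simp only [sympForm, Pi.add_apply, ← Finset.sum_add_distrib]
                     exact Finset.sum_congr rfl fun i _ => by ring)
    (fun c x y => by simp only [sympForm, Pi.smul_apply, smul_eq_mul, Finset.mul_sum]
                     exact Finset.sum_congr rfl fun i _ => by ring)

lemma sympBil_apply (F : Type) [Field F] (d : ℕ) (x y : (Fin d ⊕ Fin d) → F) :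
    sympBil F d x y = sympForm F d x y := rfl

lemma sympForm_skew (F : Type) [Field F] (d : ℕ) (x y : (Fin d ⊕ Fin d) → F) :
    sympForm F d x y = - sympForm F d y x := by
  simp only [sympForm, ← Finset.sum_neg_distrib]
  exact Finset.sum_congr rfl fun i _ => by ring

/-- any dimension `k ≤ finrank V` is achieved by a subspace of `V`. -/
lemma exists_le_finrank_eq {F M : Type*} [Field F] [AddCommGroup M] [Module F M]
    [FiniteDimensional F M] (V : Submodule F M) (k : ℕ) (hk : k ≤ finrank F V) :
    ∃ W : Submodule F M, W ≤ V ∧ finrank F W = k := by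
  let b := finBasis F V
  let f : Fin k → M := fun i => (b (Fin.castLE hk i) : M)
  have hli : LinearIndependent F f := by
    have h1 : LinearIndependent F fun i : Fin k => b (Fin.castLE hk i) :=
      b.linearIndependent.comp _ (Fin.castLE_injective hk)
    exact h1.map' V.subtype (Submodule.ker_subtype V)
  refine ⟨Submodule.span F (Set.range f), ?_, ?_⟩
  · rw [Submodule.span_le]
    rintro x ⟨i, rfl⟩
    exact (b (Fin.castLE hk i)).2
  · rw [finrank_span_eq_card hli, Fintype.card_fin]


set_option maxHeartbeats 1000000 in
/-- Given isotropic subspaces `W1, W2 ⊆ F_q^{2d}` with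
`dim W1 = d0 − k` and `dim W2 = d0 ≤ d`, there is a `k`-dimensional isotropic
subspace `W ⊆ W2` with `W ∩ (W1 ∩ W2) = {0}` such that `W + W1` is a
`d0`-dimensional isotropic subspace. -/
theorem stmt6 (F : Type) [Field F] [Fintype F] (d d0 k : ℕ)
    (hk : k ≤ d0) (hd0 : d0 ≤ d)
    (W1 W2 : Submodule F ((Fin d ⊕ Fin d) → F))
    (hW1 : IsIsotropic F d W1) (hW2 : IsIsotropic F d W2)
    (hdim1 : finrank F W1 = d0 - k) (hdim2 : finrank F W2 = d0) :
    ∃ W : Submodule F ((Fin d ⊕ Fin d) → F),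
      W ≤ W2 ∧ finrank F W = k ∧ IsIsotropic F d W ∧
      W ⊓ (W1 ⊓ W2) = ⊥ ∧
      IsIsotropic F d (W ⊔ W1) ∧ finrank F ↥(W ⊔ W1) = d0 := by
  classical
  -- the symplectic complement of W1
  set S : Submodule F ((Fin d ⊕ Fin d) → F) := ⨅ u ∈ W1, LinearMap.ker ((sympBil F d).flip u) with hS
  have mem_S : ∀ v : ((Fin d ⊕ Fin d) → F), v ∈ S ↔ ∀ u ∈ W1, sympForm F d v u = 0 := by
    intro v
    simp only [hS, Submodule.mem_iInf, LinearMap.mem_ker, LinearMap.flip_apply]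
    exact Iff.rfl
  set N : Submodule F ((Fin d ⊕ Fin d) → F) := W1 ⊓ W2 with hN
  set m := finrank F N with hm
  have hmle : m ≤ d0 - k := by
    rw [hm, ← hdim1]; exact Submodule.finrank_mono inf_le_left
  -- quotient setup
  set N' : Submodule F W1 := N.comap W1.subtype with hN'
  have hN'rank : finrank F N' = m := by
    rw [hm]
    exact LinearEquiv.finrank_eq (Submodule.comapSubtypeEquivOfLe (inf_le_left : N ≤ W1))
  have hvanish : ∀ v : W2, N' ≤ LinearMap.ker (((sympBil F d) (v : (Fin d ⊕ Fin d) → F)).comp W1.subtype) := by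
    rintro v x hx
    simp only [LinearMap.mem_ker, LinearMap.comp_apply, Submodule.coe_subtype, sympBil_apply]
    exact hW2 _ v.2 _ hx.2
  set φ : W2 →ₗ[F] (Module.Dual F (W1 ⧸ N')) :=
    { toFun := fun v => N'.liftQ (((sympBil F d) (v : (Fin d ⊕ Fin d) → F)).comp W1.subtype) (hvanish v)
      map_add' := by
        intro v w
        apply LinearMap.ext
        intro x
        obtain ⟨u, rfl⟩ := Submodule.Quotient.mk_surjective _ x
        simp [Submodule.liftQ_apply]
      map_smul' := by
        intro c v
        apply LinearMap.ext
        intro x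
        obtain ⟨u, rfl⟩ := Submodule.Quotient.mk_surjective _ x
        simp [Submodule.liftQ_apply] } with hφ
  set U : Submodule F ((Fin d ⊕ Fin d) → F) := S ⊓ W2 with hU
  have hker : LinearMap.ker φ = U.comap W2.subtype := by
    ext v
    simp only [LinearMap.mem_ker, Submodule.mem_comap, hU, Submodule.mem_inf, mem_S]
    constructor
    · intro h
      refine ⟨fun u hu => ?_, v.2⟩
      have := congrArg (fun g => g (Submodule.Quotient.mk (⟨u, hu⟩ : W1))) h
      simpa [hφ, Submodule.liftQ_apply, sympBil_apply] using this
    · intro ⟨h, _⟩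
      apply LinearMap.ext
      intro x
      obtain ⟨u, rfl⟩ := Submodule.Quotient.mk_surjective _ x
      simpa [hφ, Submodule.liftQ_apply, sympBil_apply] using h u u.2
  -- dimension count
  have hrn : finrank F (LinearMap.range φ) + finrank F (LinearMap.ker φ) = d0 := by
    rw [LinearMap.finrank_range_add_finrank_ker φ, hdim2]
  have hrange : finrank F (LinearMap.range φ) ≤ (d0 - k) - m := by
    have h1 : finrank F (LinearMap.range φ) ≤ finrank F (Module.Dual F (W1 ⧸ N')) :=
      Submodule.finrank_le _
    have h2 : finrank F (Module.Dual F (W1 ⧸ N')) = finrank F (W1 ⧸ N') :=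
      Subspace.dual_finrank_eq
    have h3 : finrank F (W1 ⧸ N') + finrank F N' = finrank F W1 :=
      Submodule.finrank_quotient_add_finrank N'
    rw [hN'rank, hdim1] at h3
    omega
  have hUrank : k + m ≤ finrank F U := by
    have he : finrank F (U.comap W2.subtype) = finrank F U :=
      LinearEquiv.finrank_eq (Submodule.comapSubtypeEquivOfLe (inf_le_right : U ≤ W2))
    rw [hker, he] at hrn
    omega
  -- complement of N inside U
  have hNU : N ≤ U := by
    refine le_inf (fun v hv => ?_) inf_le_right
    rw [mem_S]
    exact fun u hu => hW1 v hv.1 u hu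
  set N₀ : Submodule F U := N.comap U.subtype with hN₀
  have hN₀rank : finrank F N₀ = m := by
    rw [hm]; exact LinearEquiv.finrank_eq (Submodule.comapSubtypeEquivOfLe hNU)
  obtain ⟨C₀, hC₀⟩ := Submodule.exists_isCompl N₀
  have hCrank : finrank F N₀ + finrank F C₀ = finrank F U :=
    Submodule.finrank_add_eq_of_isCompl hC₀
  set C : Submodule F ((Fin d ⊕ Fin d) → F) := C₀.map U.subtype with hC
  have hCU : C ≤ U := Submodule.map_subtype_le U C₀
  have hCr : finrank F C = finrank F C₀ := Submodule.finrank_map_subtype_eq U C₀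
  have hkC : k ≤ finrank F C := by omega
  obtain ⟨W, hWC, hWr⟩ := exists_le_finrank_eq C k hkC
  have hWU : W ≤ U := hWC.trans hCU
  have hWS : W ≤ S := hWU.trans inf_le_left
  have hWW2 : W ≤ W2 := hWU.trans inf_le_right
  -- C ∩ N = ⊥
  have hCN : C ⊓ N = ⊥ := by
    have h1 : N = N₀.map U.subtype := by
      rw [hN₀, Submodule.map_comap_subtype]
      exact (inf_eq_right.mpr hNU).symm
    rw [hC, h1, ← Submodule.map_inf _ (Submodule.injective_subtype U),
      hC₀.symm.inf_eq_bot, Submodule.map_bot]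
  have hWN : W ⊓ N = ⊥ := by
    rw [eq_bot_iff, ← hCN]
    exact inf_le_inf_right _ hWC
  refine ⟨W, hWW2, hWr, fun x hx y hy => hW2 x (hWW2 hx) y (hWW2 hy), hWN, ?_, ?_⟩
  · -- W ⊔ W1 isotropic
    intro x hx y hy
    rw [Submodule.mem_sup] at hx hy
    obtain ⟨w, hw, u, hu, rfl⟩ := hx
    obtain ⟨w', hw', u', hu', rfl⟩ := hy
    have e : sympForm F d (w + u) (w' + u') =
        sympForm F d w w' + sympForm F d w u' + (sympForm F d u w' + sympForm F d u u') := by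
      simp only [← sympBil_apply, map_add, LinearMap.add_apply]
      ring
    rw [e, hW2 w (hWW2 hw) w' (hWW2 hw'), (mem_S w).mp (hWS hw) u' hu', hW1 u hu u' hu',
      sympForm_skew, (mem_S w').mp (hWS hw') u hu]
    ring
  · -- dimension of W ⊔ W1
    have hWinf : W ⊓ W1 = ⊥ := by
      rw [eq_bot_iff, ← hWN]
      exact le_inf inf_le_left (le_inf inf_le_right (inf_le_left.trans hWW2))
    have := Submodule.finrank_sup_add_finrank_inf_eq W W1
    rw [hWinf, finrank_bot, hWr, hdim1] at this
    omega
end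

section
/- Let ω be the standard symplectic form on F_q^{2d}. If U and W are two independently and uniformly chosen maximal (d-dimensional) isotropic subspaces of F_q^{2d}, then U ∩ W = {0} with probability at least 1 − 4/q. -/
/-!
Count isotropic frames, i.e. linearly independent tuples `w₁, …, w_k` spanning an isotropic
subspace `W` with `W ∩ U = 0` for a fixed subspace `U`. Such a frame extends by exactly the
vectors of `W^⊥` outside `U + W`, and since `W ≤ W^⊥`, the modular law gives
`(U + W) ∩ W^⊥ = W ⊕ (U ∩ W^⊥)`. For `U = 0` this leaves `q^(2d-k) - q^k` extensions; for
`U` Lagrangian, `U ∩ W^⊥ = (U + W)^⊥` has dimension `d - k`, leaving `q^(2d-k) - q^d`. Each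
`d`-frame is an ordered basis of a Lagrangian, so the proportion of Lagrangians transverse to a
fixed one is `∏_{k<d} (q^(2d-k) - q^d) / (q^(2d-k) - q^k)`. The `k`-th factor is at least
`1 - q^(k-d)`, and by the Weierstrass product inequality the product is at least
`1 - ∑_{j=1}^d q^(-j) ≥ 1 - 1/(q-1) ≥ 1 - 4/q`.
-/

open Module

open Submodule
open LinearMap (BilinForm)

section Numerics

open Finset

theorem one_sub_sum_le_prod_one_sub {ι : Type*} (s : Finset ι) {f : ι → ℝ}
    (h0 : ∀ i ∈ s, 0 ≤ f i) (h1 : ∀ i ∈ s, f i ≤ 1) :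
    1 - ∑ i ∈ s, f i ≤ ∏ i ∈ s, (1 - f i) := by
  induction s using Finset.cons_induction with
  | empty => simp
  | cons a s _ ih =>
    rw [prod_cons, sum_cons]
    have hs := ih (fun i hi => h0 i (mem_cons_of_mem hi)) (fun i hi => h1 i (mem_cons_of_mem hi))
    have hsum : 0 ≤ ∑ i ∈ s, f i := sum_nonneg fun i hi => h0 i (mem_cons_of_mem hi)
    nlinarith [h0 a (mem_cons_self a s), h1 a (mem_cons_self a s)]

theorem one_sub_pow_div_pow_mul_le {r : ℝ} (hr : 1 ≤ r) {i d : ℕ} (hi : i ≤ d) :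
    (1 - r ^ i / r ^ d) * (r ^ (2 * d - i) - r ^ i) ≤ r ^ (2 * d - i) - r ^ d := by
  set a := r ^ i
  set c := r ^ (d - i)
  have ha : 0 < a := by positivity
  have hc : 1 ≤ c := one_le_pow₀ hr
  have hd : r ^ d = a * c := by rw [← pow_add]; congr 1; omega
  have h2d : r ^ (2 * d - i) = a * c * c := by rw [← hd, ← pow_add]; congr 1; omega
  rw [hd, h2d]
  calc (1 - a / (a * c)) * (a * c * c - a) = a * c * c - a * c - (a - a / c) := by
        field_simp
    _ ≤ a * c * c - a * c := by linarith [div_le_self ha.le hc]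

theorem sum_pow_div_pow_le {r : ℝ} (hr : 1 < r) (d : ℕ) :
    ∑ i ∈ range d, r ^ i / r ^ d ≤ 1 / (r - 1) := by
  rw [← sum_div, div_le_div_iff₀ (by positivity) (by linarith), geom_sum_mul]
  linarith

theorem one_sub_four_div_mul_prod_le {r : ℝ} (hr : 2 ≤ r) (d : ℕ) :
    (1 - 4 / r) * ∏ i ∈ range d, (r ^ (2 * d - i) - r ^ i)
      ≤ ∏ i ∈ range d, (r ^ (2 * d - i) - r ^ d) := by
  have hpow : ∀ {i j}, i ≤ j → r ^ i ≤ r ^ j := fun h => pow_le_pow_right₀ (by linarith) h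
  have hfactor : ∀ i ∈ range d, 0 ≤ r ^ (2 * d - i) - r ^ i := fun i hi =>
    sub_nonneg.2 (hpow (by have := mem_range.1 hi; omega))
  have hf0 : ∀ i ∈ range d, 0 ≤ r ^ i / r ^ d := fun i _ => by positivity
  have hf1 : ∀ i ∈ range d, r ^ i / r ^ d ≤ 1 := fun i hi =>
    div_le_one_of_le₀ (hpow (mem_range.1 hi).le) (by positivity)
  have hsum : ∑ i ∈ range d, r ^ i / r ^ d ≤ 4 / r :=
    (sum_pow_div_pow_le (by linarith) d).trans <| by
      rw [div_le_div_iff₀ (by linarith) (by linarith)]; linarith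
  calc (1 - 4 / r) * ∏ i ∈ range d, (r ^ (2 * d - i) - r ^ i)
      ≤ (∏ i ∈ range d, (1 - r ^ i / r ^ d)) *
          ∏ i ∈ range d, (r ^ (2 * d - i) - r ^ i) := by
        gcongr
        · exact prod_nonneg hfactor
        · linarith [one_sub_sum_le_prod_one_sub (range d) hf0 hf1]
    _ = ∏ i ∈ range d, (1 - r ^ i / r ^ d) * (r ^ (2 * d - i) - r ^ i) := prod_mul_distrib.symm
    _ ≤ ∏ i ∈ range d, (r ^ (2 * d - i) - r ^ d) :=
        prod_le_prod (fun i hi => mul_nonneg (sub_nonneg.2 (hf1 i hi)) (hfactor i hi))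
          fun i hi => one_sub_pow_div_pow_mul_le (by linarith) (mem_range.1 hi).le

end Numerics

theorem Nat.cast_prod_pow_sub_pow {ι : Type*} (s : Finset ι) {q : ℕ} (hq : 0 < q)
    {a b : ι → ℕ} (hab : ∀ i ∈ s, b i ≤ a i) :
    ((∏ i ∈ s, (q ^ a i - q ^ b i) : ℕ) : ℝ) =
      ∏ i ∈ s, ((q : ℝ) ^ a i - (q : ℝ) ^ b i) := by
  rw [Nat.cast_prod]
  refine Finset.prod_congr rfl fun i hi => ?_
  rw [Nat.cast_sub (Nat.pow_le_pow_right hq (hab i hi))]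
  push_cast
  rfl

def Set.sepProdEquivSigma {α : Type*} (s : Set α) (r : α → α → Prop) :
    {P ∈ s ×ˢ s | r P.1 P.2} ≃ Σ a : s, {b ∈ s | r a b} where
  toFun P := ⟨⟨P.1.1, P.2.1.1⟩, ⟨P.1.2, P.2.1.2, P.2.2⟩⟩
  invFun p := ⟨(p.1.1, p.2.1), ⟨p.1.2, p.2.2.1⟩, p.2.2.2⟩
  left_inv _ := rfl
  right_inv _ := rfl

theorem Submodule.disjoint_sup_span_singleton_iff {F V : Type*} [Field F] [AddCommGroup V]
    [Module F V] {U W : Submodule F V} {x : V} (hUW : Disjoint U W) (hx : x ∉ W) :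
    Disjoint U (W ⊔ F ∙ x) ↔ x ∉ U ⊔ W := by
  have hx0 : x ≠ 0 := fun h => hx (h ▸ W.zero_mem)
  rw [← disjoint_span_singleton' hx0]
  exact ⟨((disjoint_span_singleton' hx0).2 hx).disjoint_sup_left_of_disjoint_sup_right,
    hUW.disjoint_sup_right_of_disjoint_sup_left⟩

theorem Submodule.ncard_coe_eq_pow_finrank {F V : Type*} [Field F] [Fintype F] [AddCommGroup V]
    [Module F V] [Finite V] (P : Submodule F V) :
    (P : Set V).ncard = Fintype.card F ^ finrank F P := by
  rw [← Nat.card_coe_set_eq, SetLike.coe_sort_coe, natCard_eq_pow_finrank (K := F),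
    Nat.card_eq_fintype_card]

namespace LinearMap.BilinForm

section Orthogonal

variable {R M : Type*} [CommSemiring R] [AddCommMonoid M] [Module R M] {B : BilinForm R M}

theorem mem_orthogonal_span_iff {s : Set M} {m : M} :
    m ∈ B.orthogonal (span R s) ↔ ∀ x ∈ s, B x m = 0 := by
  refine ⟨fun h x hx => h x (subset_span hx), fun h n hn => ?_⟩
  induction hn using span_induction with
  | mem x hx => exact h x hx
  | zero => simp
  | add x y _ _ hx hy => simp [hx, hy]
  | smul c x _ hx => simp [hx]

theorem span_range_le_orthogonal {ι : Type*} {w : ι → M} (h : ∀ i j, B (w i) (w j) = 0) :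
    span R (Set.range w) ≤ B.orthogonal (span R (Set.range w)) :=
  span_le.2 <| Set.range_subset_iff.2 fun j =>
    mem_orthogonal_span_iff.2 <| Set.forall_mem_range.2 fun i => h i j

theorem orthogonal_sup (N L : Submodule R M) :
    B.orthogonal (N ⊔ L) = B.orthogonal N ⊓ B.orthogonal L := by
  refine le_antisymm (le_inf (orthogonal_le le_sup_left) (orthogonal_le le_sup_right))
    fun m hm n hn => ?_
  obtain ⟨x, hx, y, hy, rfl⟩ := mem_sup.1 hn
  rw [map_add, LinearMap.add_apply, hm.1 x hx, hm.2 y hy, add_zero]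

end Orthogonal

variable {F V : Type*} [Field F] [AddCommGroup V] [Module F V] {B : BilinForm F V}

def isotropicSubspaces (B : BilinForm F V) (d : ℕ) : Set (Submodule F V) :=
  {W | W ≤ B.orthogonal W ∧ finrank F W = d}

section Lagrangian

variable [FiniteDimensional F V] {d : ℕ}

theorem orthogonal_eq_self_of_mem_isotropicSubspaces (hN : B.Nondegenerate)
    (hV : finrank F V = 2 * d) {U : Submodule F V} (hU : U ∈ isotropicSubspaces B d) :
    B.orthogonal U = U :=
  (eq_of_le_of_finrank_le hU.1 (by rw [finrank_orthogonal hN, hU.2]; omega)).symm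

theorem finrank_inf_orthogonal_of_mem_isotropicSubspaces (hN : B.Nondegenerate)
    (hV : finrank F V = 2 * d) {U W : Submodule F V} (hU : U ∈ isotropicSubspaces B d)
    (hUW : Disjoint U W) : finrank F ↥(U ⊓ B.orthogonal W) = d - finrank F W := by
  have hsup := finrank_sup_add_finrank_inf_eq U W
  rw [disjoint_iff.1 hUW, finrank_bot, hU.2] at hsup
  have : U ⊓ B.orthogonal W = B.orthogonal (U ⊔ W) := by
    rw [orthogonal_sup, orthogonal_eq_self_of_mem_isotropicSubspaces hN hV hU]
  rw [this, finrank_orthogonal hN]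
  omega

end Lagrangian

section Frames

variable {U : Submodule F V} {k d : ℕ}

def isotropicFrames (B : BilinForm F V) (U : Submodule F V) (k : ℕ) : Set (Fin k → V) :=
  {w | LinearIndependent F w ∧ (∀ i j, B (w i) (w j) = 0) ∧ Disjoint U (span F (Set.range w))}

def frameExtensions (B : BilinForm F V) (U : Submodule F V) {k : ℕ} (w : Fin k → V) : Set V :=
  ↑(B.orthogonal (span F (Set.range w))) \ ↑(U ⊔ span F (Set.range w))

theorem isotropicFrames_zero : isotropicFrames B U 0 = Set.univ :=
  Set.eq_univ_of_forall fun _ =>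
    ⟨linearIndependent_empty_type, finZeroElim, by simp [Set.range_eq_empty]⟩

theorem snoc_mem_isotropicFrames_iff (hB : B.IsAlt) {w : Fin k → V} {v : V} :
    Fin.snoc w v ∈ isotropicFrames B U (k + 1) ↔
      w ∈ isotropicFrames B U k ∧ v ∈ frameExtensions B U w := by
  set w' : Fin (k + 1) → V := Fin.snoc w v
  have hspan : span F (Set.range w') = span F (Set.range w) ⊔ F ∙ v := by
    rw [Fin.range_snoc, span_insert, sup_comm]
  have horth : v ∈ B.orthogonal (span F (Set.range w)) ↔ ∀ i, B (w i) v = 0 := by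
    rw [mem_orthogonal_span_iff, Set.forall_mem_range]
  have hiso : (∀ i j, B (w' i) (w' j) = 0) ↔
      (∀ i j, B (w i) (w j) = 0) ∧ ∀ i, B (w i) v = 0 := by
    simp only [w', Fin.forall_fin_succ', Fin.snoc_castSucc, Fin.snoc_last, hB v,
      hB.eq_iff (x := v), forall_and, and_true]
    tauto
  simp only [isotropicFrames, frameExtensions, Set.mem_ofPred_eq, Set.mem_sdiff, SetLike.mem_coe,
    w', linearIndependent_finSnoc, hspan, hiso, horth]
  constructor
  · rintro ⟨⟨hli, hvw⟩, ⟨hww, hwv⟩, hdisj⟩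
    have hUw := hdisj.mono_right le_sup_left
    exact ⟨⟨hli, hww, hUw⟩, hwv, (disjoint_sup_span_singleton_iff hUw hvw).1 hdisj⟩
  · rintro ⟨⟨hli, hww, hUw⟩, hwv, hv⟩
    have hvw : v ∉ span F (Set.range w) := fun h => hv (mem_sup_right h)
    exact ⟨⟨hli, hvw⟩, ⟨hww, hwv⟩, (disjoint_sup_span_singleton_iff hUw hvw).2 hv⟩

def isotropicFramesSuccEquiv (hB : B.IsAlt) (U : Submodule F V) (k : ℕ) :
    isotropicFrames B U (k + 1) ≃ Σ w : isotropicFrames B U k, frameExtensions B U w.1 where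
  toFun w :=
    have h := (snoc_mem_isotropicFrames_iff hB).1 ((Fin.snoc_init_self w.1).symm ▸ w.2)
    ⟨⟨_, h.1⟩, ⟨_, h.2⟩⟩
  invFun p := ⟨Fin.snoc p.1.1 p.2.1, (snoc_mem_isotropicFrames_iff hB).2 ⟨p.1.2, p.2.2⟩⟩
  left_inv w := Subtype.ext (Fin.snoc_init_self w.1)
  right_inv _ := Sigma.subtype_ext (Subtype.ext (Fin.init_snoc (α := fun _ => V) ..))
    (Fin.snoc_last (α := fun _ => V) ..)

def spanOfIsotropicFrame (w : isotropicFrames B U d) :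
    {W ∈ isotropicSubspaces B d | Disjoint U W} :=
  ⟨span F (Set.range w.1), ⟨span_range_le_orthogonal w.2.2.1,
    by rw [finrank_span_eq_card w.2.1, Fintype.card_fin]⟩, w.2.2.2⟩

theorem span_range_coe_eq_of_linearIndependent [FiniteDimensional F V] {W : Submodule F V}
    (hW : finrank F W = d) {t : Fin d → W} (ht : LinearIndependent F t) :
    span F (Set.range fun i => (t i : V)) = W := by
  have hli : LinearIndependent F fun i => (t i : V) := ht.map' W.subtype W.ker_subtype
  refine eq_of_le_of_finrank_le (span_le.2 <| Set.range_subset_iff.2 fun i => (t i).2) ?_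
  rw [finrank_span_eq_card hli, Fintype.card_fin, hW]

def spanOfIsotropicFrameFiberEquiv [FiniteDimensional F V]
    (W : {W ∈ isotropicSubspaces B d | Disjoint U W}) :
    {w : isotropicFrames B U d // spanOfIsotropicFrame w = W} ≃
      {t : Fin d → W.1 // LinearIndependent F t} where
  toFun w := ⟨fun i => ⟨w.1.1 i, congrArg Subtype.val w.2 ▸ subset_span ⟨i, rfl⟩⟩,
    LinearIndependent.of_comp W.1.subtype w.1.2.1⟩
  invFun t := ⟨⟨fun i => t.1 i, t.2.map' _ W.1.ker_subtype,
      fun i j => W.2.1.1 (t.1 j).2 _ (t.1 i).2,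
      (span_range_coe_eq_of_linearIndependent W.2.1.2 t.2).symm ▸ W.2.2⟩,
    Subtype.ext (span_range_coe_eq_of_linearIndependent W.2.1.2 t.2)⟩
  left_inv _ := rfl
  right_inv _ := rfl

theorem card_isotropicFrames [Finite V] (hB : B.IsAlt) {c : ℕ → ℕ} {n : ℕ}
    (hc : ∀ k < n, ∀ w ∈ isotropicFrames B U k, Nat.card (frameExtensions B U w) = c k) :
    Nat.card (isotropicFrames B U n) = ∏ k ∈ Finset.range n, c k := by
  induction n with
  | zero => simp [isotropicFrames_zero]
  | succ n ih =>
    have := Fintype.ofFinite (isotropicFrames B U n)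
    rw [Nat.card_congr (isotropicFramesSuccEquiv hB U n), Nat.card_sigma,
      Finset.sum_const_nat fun w _ => hc n n.lt_succ_self w.1 w.2, Finset.card_univ,
      ← Nat.card_eq_fintype_card, ih fun k hk => hc k (hk.trans n.lt_succ_self),
      Finset.prod_range_succ]

end Frames

section Counting

variable [Fintype F] [Finite V] {U : Submodule F V} {k d : ℕ}

local notation "q" => Fintype.card F
local notation "𝓛" => isotropicSubspaces B d

theorem card_frameExtensions (hN : B.Nondegenerate) {w : Fin k → V}
    (hw : w ∈ isotropicFrames B U k) :
    Nat.card (frameExtensions B U w) =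
      q ^ (finrank F V - k) -
        q ^ (k + finrank F ↥(U ⊓ B.orthogonal (span F (Set.range w)))) := by
  set W := span F (Set.range w)
  set O := B.orthogonal W
  have hWk : finrank F W = k := by rw [finrank_span_eq_card hw.1, Fintype.card_fin]
  have hmod : (U ⊔ W) ⊓ O = W ⊔ U ⊓ O := by
    rw [sup_comm, sup_inf_assoc_of_le U (span_range_le_orthogonal hw.2.1)]
  have hfin : finrank F ↥(W ⊔ U ⊓ O) = k + finrank F ↥(U ⊓ O) := by
    have := finrank_sup_add_finrank_inf_eq W (U ⊓ O)
    rw [disjoint_iff.1 (hw.2.2.symm.mono_right inf_le_left), finrank_bot, hWk] at this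
    omega
  have hdiff : frameExtensions B U w = ↑O \ ↑((U ⊔ W) ⊓ O) := by
    rw [coe_inf, Set.sdiff_inter_self_eq_sdiff]; rfl
  rw [hdiff, Nat.card_coe_set_eq, Set.ncard_sdiff (by exact inf_le_right), hmod,
    ncard_coe_eq_pow_finrank, ncard_coe_eq_pow_finrank, finrank_orthogonal hN, hWk, hfin]

theorem card_isotropicFrames_bot (hB : B.IsAlt) (hN : B.Nondegenerate) (n : ℕ) :
    Nat.card (isotropicFrames B ⊥ n) =
      ∏ k ∈ Finset.range n, (q ^ (finrank F V - k) - q ^ k) :=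
  card_isotropicFrames hB fun _ _ _ hw => by
    rw [card_frameExtensions hN hw, bot_inf_eq, finrank_bot, add_zero]

theorem card_isotropicFrames_of_mem_isotropicSubspaces (hB : B.IsAlt) (hN : B.Nondegenerate)
    (hV : finrank F V = 2 * d) (hU : U ∈ 𝓛) :
    Nat.card (isotropicFrames B U d) = ∏ k ∈ Finset.range d, (q ^ (2 * d - k) - q ^ d) :=
  card_isotropicFrames hB fun _ hk _ hw => by
    rw [card_frameExtensions hN hw, finrank_inf_orthogonal_of_mem_isotropicSubspaces hN hV hU
      hw.2.2, finrank_span_eq_card hw.1, Fintype.card_fin, hV, Nat.add_sub_cancel' hk.le]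

theorem card_isotropicFrames_eq_mul :
    Nat.card (isotropicFrames B U d) =
      Nat.card {W ∈ 𝓛 | Disjoint U W} * ∏ i : Fin d, (q ^ d - q ^ (i : ℕ)) := by
  have := Fintype.ofFinite {W ∈ 𝓛 | Disjoint U W}
  rw [← Nat.card_congr (Equiv.sigmaFiberEquiv spanOfIsotropicFrame), Nat.card_sigma,
    Finset.sum_const_nat fun W _ => ?_, Finset.card_univ, Nat.card_eq_fintype_card]
  rw [Nat.card_congr (spanOfIsotropicFrameFiberEquiv W), card_linearIndependent W.2.1.2.ge,
    W.2.1.2]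

theorem card_isotropicSubspaces_mul (hB : B.IsAlt) (hN : B.Nondegenerate)
    (hV : finrank F V = 2 * d) :
    Nat.card 𝓛 * ∏ i : Fin d, (q ^ d - q ^ (i : ℕ)) =
      ∏ k ∈ Finset.range d, (q ^ (2 * d - k) - q ^ k) := by
  have : {W ∈ 𝓛 | Disjoint ⊥ W} = 𝓛 := by simp
  rw [← this, ← card_isotropicFrames_eq_mul, card_isotropicFrames_bot hB hN, hV]

theorem card_disjoint_isotropicSubspaces_mul (hB : B.IsAlt) (hN : B.Nondegenerate)
    (hV : finrank F V = 2 * d) (hU : U ∈ 𝓛) :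
    Nat.card {W ∈ 𝓛 | Disjoint U W} * ∏ i : Fin d, (q ^ d - q ^ (i : ℕ)) =
      ∏ k ∈ Finset.range d, (q ^ (2 * d - k) - q ^ d) := by
  rw [← card_isotropicFrames_eq_mul, card_isotropicFrames_of_mem_isotropicSubspaces hB hN hV hU]

theorem card_disjoint_pairs_isotropicSubspaces_mul (hB : B.IsAlt) (hN : B.Nondegenerate)
    (hV : finrank F V = 2 * d) :
    Nat.card {P ∈ 𝓛 ×ˢ 𝓛 | Disjoint P.1 P.2} * ∏ i : Fin d, (q ^ d - q ^ (i : ℕ)) =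
      Nat.card 𝓛 * ∏ k ∈ Finset.range d, (q ^ (2 * d - k) - q ^ d) := by
  have := Fintype.ofFinite 𝓛
  rw [Nat.card_congr (Set.sepProdEquivSigma 𝓛 Disjoint), Nat.card_sigma, Finset.sum_mul,
    Finset.sum_const_nat fun U _ => card_disjoint_isotropicSubspaces_mul hB hN hV U.2,
    Finset.card_univ, Nat.card_eq_fintype_card]

theorem one_sub_four_div_mul_card_le_card_disjoint (hB : B.IsAlt) (hN : B.Nondegenerate)
    (hV : finrank F V = 2 * d) :
    (1 - 4 / (q : ℝ)) * Nat.card (𝓛 ×ˢ 𝓛) ≤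
      Nat.card {P ∈ 𝓛 ×ˢ 𝓛 | Disjoint P.1 P.2} := by
  have hq : 0 < q := Fintype.card_pos
  have hb : (0 : ℝ) < ∏ i : Fin d, (q ^ d - q ^ (i : ℕ)) := Nat.cast_pos.2 <|
    Finset.prod_pos fun i _ => Nat.sub_pos_of_lt (Nat.pow_lt_pow_right Fintype.one_lt_card i.2)
  have hall := congrArg (Nat.cast : ℕ → ℝ) (card_isotropicSubspaces_mul hB hN hV)
  have hdisj :=
    congrArg (Nat.cast : ℕ → ℝ) (card_disjoint_pairs_isotropicSubspaces_mul hB hN hV)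
  rw [Nat.cast_prod_pow_sub_pow _ hq fun k hk => by simp at hk; omega] at hall
  rw [Nat.cast_mul, Nat.cast_mul, Nat.cast_prod_pow_sub_pow (b := fun _ => d) _ hq
    fun k hk => by simp at hk; omega] at hdisj
  have hnum := one_sub_four_div_mul_prod_le (r := q) (by exact_mod_cast Fintype.one_lt_card) d
  rw [Nat.card_congr (Equiv.Set.prod 𝓛 𝓛), Nat.card_prod, ← mul_le_mul_iff_of_pos_right hb]
  push_cast at hall hdisj ⊢
  rw [hdisj]
  rw [← hall] at hnum
  linarith [mul_le_mul_of_nonneg_left hnum (Nat.cast_nonneg (Nat.card 𝓛))]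

end Counting

end LinearMap.BilinForm

section Symplectic

variable (F : Type) [Field F] (d : ℕ)

def sympBilinForm : BilinForm F ((Fin d ⊕ Fin d) → F) :=
  LinearMap.mk₂ F (sympForm F d)
    (fun _ _ _ => by
      simp only [sympForm, Pi.add_apply, ← Finset.sum_add_distrib]; congr! 1; ring)
    (fun _ _ _ => by
      simp only [sympForm, Pi.smul_apply, smul_eq_mul, Finset.mul_sum]; congr! 1; ring)
    (fun _ _ _ => by
      simp only [sympForm, Pi.add_apply, ← Finset.sum_add_distrib]; congr! 1; ring)
    (fun _ _ _ => by
      simp only [sympForm, Pi.smul_apply, smul_eq_mul, Finset.mul_sum]; congr! 1; ring)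

theorem isAlt_sympBilinForm : (sympBilinForm F d).IsAlt := fun x => by
  simp [sympBilinForm, sympForm, mul_comm]

theorem nondegenerate_sympBilinForm : (sympBilinForm F d).Nondegenerate := by
  refine (isAlt_sympBilinForm F d).isRefl.nondegenerate_iff_separatingLeft.2 fun x hx => ?_
  funext i
  rcases i with i | i
  · simpa [sympBilinForm, sympForm, Pi.single_apply] using hx (Pi.single (Sum.inr i) 1)
  · simpa [sympBilinForm, sympForm, Pi.single_apply] using hx (Pi.single (Sum.inl i) 1)

theorem finrank_symplecticSpace : finrank F ((Fin d ⊕ Fin d) → F) = 2 * d := by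
  rw [finrank_fintype_fun_eq_card, Fintype.card_sum, Fintype.card_fin, two_mul]

variable {F d}

theorem isIsotropic_iff_le_orthogonal {W : Submodule F ((Fin d ⊕ Fin d) → F)} :
    IsIsotropic F d W ↔ W ≤ (sympBilinForm F d).orthogonal W :=
  ⟨fun h _ hm _ hn => h _ hn _ hm, fun h _ hx _ hy => h hy _ hx⟩

end Symplectic

/-- If `U` and `W` are two independently and uniformly chosen
maximal (`d`-dimensional) isotropic subspaces of `F_q^{2d}`, then `U ∩ W = {0}`
with probability at least `1 − 4/q`: the number of pairs of maximal isotropic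
subspaces intersecting trivially is at least `(1 − 4/q)` times the total number
of pairs. -/
theorem stmt7 (q d : ℕ) (F : Type) [Field F] [Fintype F]
    (hq : Fintype.card F = q) :
    (1 - 4 / (q : ℝ)) *
        (Nat.card {P : Submodule F ((Fin d ⊕ Fin d) → F) ×
            Submodule F ((Fin d ⊕ Fin d) → F) //
          IsIsotropic F d P.1 ∧ finrank F P.1 = d ∧
          IsIsotropic F d P.2 ∧ finrank F P.2 = d} : ℝ)
      ≤ (Nat.card {P : Submodule F ((Fin d ⊕ Fin d) → F) ×
            Submodule F ((Fin d ⊕ Fin d) → F) //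
          (IsIsotropic F d P.1 ∧ finrank F P.1 = d ∧
           IsIsotropic F d P.2 ∧ finrank F P.2 = d) ∧ P.1 ⊓ P.2 = ⊥} : ℝ) := by
  subst hq
  set 𝓛 := LinearMap.BilinForm.isotropicSubspaces (sympBilinForm F d) d
  have hmem (P : Submodule F ((Fin d ⊕ Fin d) → F) × Submodule F ((Fin d ⊕ Fin d) → F)) :
      P ∈ 𝓛 ×ˢ 𝓛 ↔
        IsIsotropic F d P.1 ∧ finrank F P.1 = d ∧
          IsIsotropic F d P.2 ∧ finrank F P.2 = d := by
    simp only [Set.mem_prod, 𝓛, LinearMap.BilinForm.isotropicSubspaces, Set.mem_ofPred_eq,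
      isIsotropic_iff_le_orthogonal, and_assoc]
  rw [← Nat.card_congr (Equiv.subtypeEquivRight hmem),
    ← Nat.card_congr (Equiv.subtypeEquivRight fun P => and_congr (hmem P) disjoint_iff)]
  exact LinearMap.BilinForm.one_sub_four_div_mul_card_le_card_disjoint
    (isAlt_sympBilinForm F d) (nondegenerate_sympBilinForm F d) (finrank_symplecticSpace F d)
end

section
/- Let X be a d-dimensional simplicial complex that is a γ one-sided local spectral expander. For all i ≤ d and α ∈ (1/i, 1), the down-up random walk on X(i) that goes down to a uniformly random αi-subset and back up has second largest singular value at most α + poly(i)·γ. -/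
open scoped Classical

/-- The number of top faces of the complex containing a given face `s`. -/
def nFaces {ι : Type} [DecidableEq ι] (Ω : Finset (Finset ι)) (s : Finset ι) : ℕ :=
  (Ω.filter fun D => s ⊆ D).card

/-- The set `X(i)` of all `i`-element subsets of the vertex set. -/
noncomputable def levelSet (ι : Type) [Fintype ι] [DecidableEq ι] (i : ℕ) :
    Finset (Finset ι) :=
  Finset.univ.filter fun s => s.card = i

/-- The measure `μ_i` on `X(i)` of a `d`-dimensional complex with top faces `Ω`:
sample a uniform top face and a uniform `i`-subset of it. -/
noncomputable def μlev {ι : Type} [DecidableEq ι] (Ω : Finset (Finset ι))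
    (d i : ℕ) (s : Finset ι) : ℝ :=
  (nFaces Ω s : ℝ) / ((Ω.card : ℝ) * (Nat.choose d i : ℝ))

/-- The (unnormalized) edge weight of the 1-skeleton of the link of `I`:
the number of top faces containing `I ∪ {u, v}`. -/
noncomputable def linkCount {ι : Type} [DecidableEq ι] (Ω : Finset (Finset ι))
    (I : Finset ι) (u v : ι) : ℕ :=
  if u ≠ v ∧ u ∉ I ∧ v ∉ I then (Ω.filter fun D => I ∪ {u, v} ⊆ D).card else 0

/-- The (unnormalized) degree of a vertex in the 1-skeleton of the link of `I`. -/
noncomputable def linkDeg {ι : Type} [Fintype ι] [DecidableEq ι]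
    (Ω : Finset (Finset ι)) (I : Finset ι) (u : ι) : ℕ :=
  ∑ v, linkCount Ω I u v

/-- The joint distribution on `X(i) × X(i)` of the down-up walk that goes from
`s ∼ μ_i` down to a uniformly random `k`-subset `r ⊆ s` and back up to
`t ∼ μ_i( · | t ⊇ r)`. -/
noncomputable def downUp {ι : Type} [Fintype ι] [DecidableEq ι]
    (Ω : Finset (Finset ι)) (d i k : ℕ) (s t : Finset ι) : ℝ :=
  ∑ r ∈ Finset.univ.filter (fun r : Finset ι => r.card = k ∧ r ⊆ s ∧ r ⊆ t),
    μlev Ω d i s * μlev Ω d i t /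
      ((Nat.choose i k : ℝ) *
        ∑ t' ∈ levelSet ι i, (if r ⊆ t' then μlev Ω d i t' else 0))


/-!
The bilinear form of the down-up walk is `⟪D f, D g⟫` on level `k`, where `D = D_k^i` is the
conditional expectation from level `i` to level `k`; by Cauchy–Schwarz it suffices to show
`‖D f‖² ≤ (k/i + (i - k) i γ) ‖f‖²` for mean-zero `f`.

Garland's method splits `‖U g‖²`, for the up operator `U` from level `m + 1` to `m + 2`, into a
diagonal part `‖g‖²/(m + 2)` and a sum over `m`-sets `r` of quadratic forms of the links of `r`.
Local expansion bounds each link form by its projection on constants, which reassembles into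
`‖D g‖²` on level `m`, plus `γ` times its norm. As `‖D h‖² = ⟪h, U D h⟫`, induction on `m` gives
`‖D h‖² ≤ (m/(m + 1) + m γ) ‖h‖²` for mean-zero `h` on level `m + 1`, and composing these
one-step bounds (each also a contraction) gives the bound from level `i` to level `k`.
-/

open Finset

section LevelSets

variable {ι : Type} [Fintype ι] [DecidableEq ι]

lemma mem_levelSet {s : Finset ι} {m : ℕ} : s ∈ levelSet ι m ↔ s.card = m := by
  simp [levelSet]

lemma filter_levelSet_subset (s : Finset ι) (k : ℕ) :
    {r ∈ levelSet ι k | r ⊆ s} = s.powersetCard k := by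
  ext r
  simp [mem_levelSet, mem_powersetCard, and_comm]

lemma card_filter_levelSet_subset_between {r D : Finset ι} (hrD : r ⊆ D) {m : ℕ}
    (hm : r.card ≤ m) :
    #{s ∈ levelSet ι m | r ⊆ s ∧ s ⊆ D} = (D.card - r.card).choose (m - r.card) := by
  rw [← card_sdiff_of_subset hrD, ← card_powersetCard]
  refine card_bij' (fun s _ => s \ r) (fun u _ => r ∪ u) ?_ ?_ ?_ ?_
  · intro s hs
    simp only [mem_filter, mem_levelSet] at hs
    rw [mem_powersetCard, card_sdiff_of_subset hs.2.1, hs.1]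
    exact ⟨sdiff_subset_sdiff hs.2.2 le_rfl, rfl⟩
  · intro u hu
    rw [mem_powersetCard, subset_sdiff] at hu
    simp only [mem_filter, mem_levelSet]
    refine ⟨?_, subset_union_left, union_subset hrD hu.1.1⟩
    rw [card_union_of_disjoint hu.1.2.symm, hu.2]
    omega
  · intro s hs
    exact union_sdiff_of_subset (mem_filter.1 hs).2.1
  · intro u hu
    exact union_sdiff_cancel_left
      (disjoint_of_subset_right (mem_powersetCard.1 hu).1 disjoint_sdiff)

lemma sum_levelSet_superset_eq_sum_insert {M : Type} [AddCommMonoid M] (r : Finset ι)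
    (F : Finset ι → M) :
    ∑ t ∈ levelSet ι (r.card + 1) with r ⊆ t, F t = ∑ a ∈ rᶜ, F (insert a r) := by
  symm
  refine sum_nbij (fun a => insert a r) ?_ ?_ ?_ (fun _ _ => rfl)
  · intro a ha
    have ha : a ∉ r := by simpa using ha
    simp [mem_levelSet, card_insert_of_notMem ha, subset_insert]
  · intro a ha b _ hab
    exact (insert_inj (by simpa using ha)).1 hab
  · intro t ht
    simp only [coe_filter, mem_levelSet, Set.mem_ofPred] at ht
    obtain ⟨a, ha⟩ := card_eq_one.1 (show (t \ r).card = 1 by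
      rw [card_sdiff_of_subset ht.2, ht.1]; omega)
    have hat : a ∈ t \ r := ha ▸ mem_singleton_self a
    refine ⟨a, by simpa using (mem_sdiff.1 hat).2, ?_⟩
    change insert a r = t
    rw [insert_eq, ← ha, union_comm, union_sdiff_of_subset ht.2]

lemma sum_levelSet_succ_sum_mem {M : Type} [AddCommMonoid M] (n : ℕ)
    (F : Finset ι → ι → M) :
    ∑ s ∈ levelSet ι (n + 1), ∑ a ∈ s, F s a
      = ∑ t ∈ levelSet ι n, ∑ a ∈ tᶜ, F (insert a t) a := by
  rw [sum_sigma', sum_sigma']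
  refine sum_bij' (fun p _ => ⟨p.1.erase p.2, p.2⟩) (fun p _ => ⟨insert p.2 p.1, p.2⟩)
    ?_ ?_ ?_ ?_ ?_
  · rintro ⟨s, a⟩ h
    simp only [mem_sigma, mem_levelSet] at h
    simp [mem_levelSet, card_erase_of_mem h.2, h.1]
  · rintro ⟨t, a⟩ h
    simp only [mem_sigma, mem_levelSet, mem_compl] at h
    simp [mem_levelSet, card_insert_of_notMem h.2, h.1]
  · rintro ⟨s, a⟩ h
    simp [insert_erase (mem_sigma.1 h).2]
  · rintro ⟨t, a⟩ h
    simp [erase_insert (mem_compl.1 (mem_sigma.1 h).2)]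
  · rintro ⟨s, a⟩ h
    simp [insert_erase (mem_sigma.1 h).2]

lemma sum_levelSet_sum_superset {M : Type} [AddCommMonoid M] (k i : ℕ)
    (G : Finset ι → Finset ι → M) :
    ∑ r ∈ levelSet ι k, ∑ s ∈ levelSet ι i with r ⊆ s, G r s
      = ∑ s ∈ levelSet ι i, ∑ r ∈ s.powersetCard k, G r s := by
  simp_rw [sum_filter]
  rw [sum_comm]
  simp_rw [← sum_filter, filter_levelSet_subset]

lemma sum_levelSet_sum_superset_const (k i : ℕ) (G : Finset ι → ℝ) :
    ∑ r ∈ levelSet ι k, ∑ s ∈ levelSet ι i with r ⊆ s, G s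
      = i.choose k * ∑ s ∈ levelSet ι i, G s := by
  rw [sum_levelSet_sum_superset k i (fun _ s => G s), mul_sum]
  refine sum_congr rfl fun s hs => ?_
  rw [sum_const, card_powersetCard, mem_levelSet.1 hs, nsmul_eq_mul]

/-- Two distinct facets `s.erase b`, `s.erase a` of `s` are `insert a r`, `insert b r` for the
ridge `r = (s.erase a).erase b`. -/
lemma sum_mul_sq_sum_erase (w g : Finset ι → ℝ) (m : ℕ) :
    ∑ s ∈ levelSet ι (m + 2), w s * (∑ a ∈ s, g (s.erase a)) ^ 2
      = ∑ t ∈ levelSet ι (m + 1), (∑ a ∈ tᶜ, w (insert a t)) * g t ^ 2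
        + ∑ r ∈ levelSet ι m, ∑ u ∈ rᶜ, ∑ v ∈ (insert u r)ᶜ,
            w (insert v (insert u r)) * g (insert u r) * g (insert v r) := by
  have hsq : ∀ s : Finset ι, w s * (∑ a ∈ s, g (s.erase a)) ^ 2
      = ∑ a ∈ s, (w s * g (s.erase a) ^ 2
          + ∑ b ∈ s.erase a, w s * g (s.erase a) * g (s.erase b)) := by
    intro s
    rw [sq, sum_mul_sum, mul_sum]
    refine sum_congr rfl fun a ha => ?_
    rw [← add_sum_erase _ _ ha, mul_add, mul_sum]
    ring_nf
  simp_rw [hsq]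
  rw [sum_levelSet_succ_sum_mem (m + 1)]
  have hfacet : ∀ t ∈ levelSet ι (m + 1), ∀ a ∈ tᶜ,
      w (insert a t) * g ((insert a t).erase a) ^ 2
        + ∑ b ∈ (insert a t).erase a, w (insert a t) * g ((insert a t).erase a)
            * g ((insert a t).erase b)
      = w (insert a t) * g t ^ 2 + ∑ b ∈ t, w (insert a t) * g t * g ((insert a t).erase b) := by
    intro t _ a ha
    rw [erase_insert (mem_compl.1 ha)]
  rw [sum_congr rfl fun t ht => sum_congr rfl (hfacet t ht)]
  simp only [sum_add_distrib, ← sum_mul]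
  congr 1
  rw [sum_congr rfl fun t _ => sum_comm, sum_levelSet_succ_sum_mem m]
  refine sum_congr rfl fun r _ => sum_congr rfl fun u hu => sum_congr rfl fun v hv => ?_
  have hu : u ∉ r := mem_compl.1 hu
  have hv : v ∉ insert u r := mem_compl.1 hv
  rw [mem_insert, not_or] at hv
  rw [erase_insert_of_ne hv.1, erase_insert hu]

end LevelSets

section QuadraticForm

variable {ι : Type} [Fintype ι]

lemma sum_mul_sub_sq (deg φ : ι → ℝ) (c : ℝ) :
    ∑ u, deg u * (φ u - c) ^ 2
      = ∑ u, deg u * φ u ^ 2 - 2 * c * ∑ u, deg u * φ u + c ^ 2 * ∑ u, deg u := by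
  simp only [mul_sum, ← sum_sub_distrib, ← sum_add_distrib]
  exact sum_congr rfl fun u _ => by ring

lemma sum_sum_mul_sub_mul_sub {A : ι → ι → ℝ} {deg : ι → ℝ} (hA : ∀ u v, A u v = A v u)
    (hdeg : ∀ u, deg u = ∑ v, A u v) (φ : ι → ℝ) (c : ℝ) :
    ∑ u, ∑ v, A u v * (φ u - c) * (φ v - c)
      = ∑ u, ∑ v, A u v * φ u * φ v - 2 * c * ∑ u, deg u * φ u + c ^ 2 * ∑ u, deg u := by
  have hrow : ∀ ψ : ι → ℝ, ∑ u, ∑ v, A u v * ψ u = ∑ u, deg u * ψ u := fun ψ =>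
    sum_congr rfl fun u _ => by rw [← sum_mul, hdeg]
  have hcol : ∑ u, ∑ v, A u v * φ v = ∑ u, deg u * φ u := by
    rw [sum_comm]
    simp_rw [hA _ (_ : ι)]
    exact hrow φ
  have hall : ∑ u, ∑ v, A u v = ∑ u, deg u := by simpa using hrow fun _ => 1
  calc ∑ u, ∑ v, A u v * (φ u - c) * (φ v - c)
      = ∑ u, ∑ v, (A u v * φ u * φ v - c * (A u v * φ u) - c * (A u v * φ v)
          + c ^ 2 * A u v) := sum_congr rfl fun u _ => sum_congr rfl fun v _ => by ring
    _ = _ := by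
      simp only [sum_add_distrib, sum_sub_distrib, ← mul_sum]
      rw [hrow, hcol, hall]
      ring

/-- Apply the gap to `φ - c`, where `c` is the `deg`-weighted mean of `φ`; the constant `c`
accounts for the first term on the right. -/
lemma sum_mul_mul_le_of_spectral_gap {A : ι → ι → ℝ} {deg : ι → ℝ} {γ : ℝ} (hγ : 0 ≤ γ)
    (hA : ∀ u v, A u v = A v u) (hdeg : ∀ u, deg u = ∑ v, A u v) (hdeg_nonneg : ∀ u, 0 ≤ deg u)
    (hgap : ∀ f : ι → ℝ, ∑ u, deg u * f u = 0 →
      ∑ u, ∑ v, A u v * f u * f v ≤ γ * ∑ u, deg u * f u ^ 2)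
    (φ : ι → ℝ) :
    ∑ u, ∑ v, A u v * φ u * φ v
      ≤ (∑ u, deg u * φ u) ^ 2 / ∑ u, deg u + γ * ∑ u, deg u * φ u ^ 2 := by
  have hgapc := hgap (fun u => φ u - (∑ u, deg u * φ u) / ∑ u, deg u) ?_
  · rw [sum_sum_mul_sub_mul_sub hA hdeg, sum_mul_sub_sq] at hgapc
    obtain ⟨S, hS⟩ : ∃ S, ∑ u, deg u * φ u = S := ⟨_, rfl⟩
    obtain ⟨W, hW⟩ : ∃ W, ∑ u, deg u = W := ⟨_, rfl⟩
    rw [hS, hW] at hgapc ⊢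
    have hW0 : 0 ≤ W := hW ▸ sum_nonneg fun u _ => hdeg_nonneg u
    have hS2 : 2 * (S / W) * S - (S / W) ^ 2 * W = S ^ 2 / W := by
      rcases hW0.eq_or_lt with h0 | h0
      · simp [← h0]
      · field_simp
        ring
    have hγS2 : γ * (2 * (S / W) * S - (S / W) ^ 2 * W) = γ * (S ^ 2 / W) := by rw [hS2]
    have : 0 ≤ γ * (S ^ 2 / W) := by positivity
    linarith
  · rcases eq_or_ne (∑ u, deg u) 0 with h0 | h0
    · have hdeg0 := (sum_eq_zero_iff_of_nonneg fun u _ => hdeg_nonneg u).1 h0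
      exact sum_eq_zero fun u hu => by rw [hdeg0 u hu, zero_mul]
    · simp only [mul_sub, sum_sub_distrib, ← sum_mul]
      rw [mul_div_cancel₀ _ h0, sub_self]

end QuadraticForm

section Measures

variable {ι : Type} [DecidableEq ι] {Ω : Finset (Finset ι)} {d : ℕ}

lemma μlev_nonneg (i : ℕ) (s : Finset ι) : 0 ≤ μlev Ω d i s := by
  unfold μlev
  positivity

lemma nFaces_eq_mul_μlev (hΩ : Ω.Nonempty) {i : ℕ} (hid : i ≤ d) (s : Finset ι) :
    (nFaces Ω s : ℝ) = Ω.card * d.choose i * μlev Ω d i s := by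
  have : (Ω.card : ℝ) * d.choose i ≠ 0 := by
    have := Nat.choose_pos hid
    have := hΩ.card_pos
    positivity
  rw [μlev, mul_div_cancel₀ _ this]

lemma sub_mul_nFaces_eq (hΩ : Ω.Nonempty) {m : ℕ} (hmd : m + 2 ≤ d) (t : Finset ι) :
    ((d - (m + 1) : ℕ) : ℝ) * nFaces Ω t
      = (m + 2) * (Ω.card * d.choose (m + 2)) * μlev Ω d (m + 1) t := by
  have hchoose : (d.choose (m + 2) * (m + 2) : ℝ) = d.choose (m + 1) * (d - (m + 1) : ℕ) := by
    exact_mod_cast Nat.choose_succ_right_eq d (m + 1)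
  rw [nFaces_eq_mul_μlev hΩ (show m + 1 ≤ d by omega)]
  linear_combination -(Ω.card : ℝ) * μlev Ω d (m + 1) t * hchoose

variable [Fintype ι]

lemma sum_nFaces_superset (hcard : ∀ D ∈ Ω, D.card = d) {r : Finset ι} {m : ℕ}
    (hrm : r.card ≤ m) :
    ∑ s ∈ levelSet ι m with r ⊆ s, (nFaces Ω s : ℝ)
      = (d - r.card).choose (m - r.card) * nFaces Ω r := by
  have hcount : ∀ D ∈ Ω, #{s ∈ {s ∈ levelSet ι m | r ⊆ s} | s ⊆ D}
      = if r ⊆ D then (d - r.card).choose (m - r.card) else 0 := by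
    intro D hD
    split_ifs with hrD
    · rw [filter_filter, ← hcard D hD, card_filter_levelSet_subset_between hrD hrm]
    · refine card_eq_zero.2 (filter_eq_empty_iff.2 fun s hs hsD => hrD ?_)
      exact (mem_filter.1 hs).2.trans hsD
  have h := sum_card_bipartiteAbove_eq_sum_card_bipartiteBelow
    (s := {s ∈ levelSet ι m | r ⊆ s}) (t := Ω) (r := fun s D => s ⊆ D)
  simp only [bipartiteAbove, bipartiteBelow] at h
  rw [sum_congr rfl hcount, sum_ite, sum_const_zero, add_zero, sum_const, smul_eq_mul] at h
  unfold nFaces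
  rw [← Nat.cast_sum, h]
  push_cast
  ring

lemma sum_μlev_superset (hcard : ∀ D ∈ Ω, D.card = d) {r : Finset ι} {k i : ℕ}
    (hr : r.card = k) (hki : k ≤ i) (hid : i ≤ d) :
    ∑ s ∈ levelSet ι i with r ⊆ s, μlev Ω d i s = i.choose k * μlev Ω d k r := by
  have hchoose : (d.choose i * i.choose k : ℝ) = d.choose k * (d - k).choose (i - k) := by
    exact_mod_cast Nat.choose_mul (n := d) hki
  have := Nat.choose_pos hid
  have := Nat.choose_pos (hki.trans hid)
  unfold μlev
  rw [← sum_div, sum_nFaces_superset hcard (hr.le.trans hki), hr]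
  rcases eq_or_ne (Ω.card : ℝ) 0 with hΩ | hΩ
  · simp [hΩ]
  · rw [← mul_div_assoc, div_eq_div_iff (by positivity) (by positivity)]
    linear_combination -((nFaces Ω r : ℝ) * Ω.card) * hchoose

end Measures

section Operators

variable {ι : Type} [Fintype ι] [DecidableEq ι] (Ω : Finset (Finset ι)) (d : ℕ)

noncomputable def levelMean (i : ℕ) (f : Finset ι → ℝ) : ℝ :=
  ∑ s ∈ levelSet ι i, μlev Ω d i s * f s

noncomputable def levelInner (i : ℕ) (f g : Finset ι → ℝ) : ℝ :=
  ∑ s ∈ levelSet ι i, μlev Ω d i s * f s * g s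

noncomputable def levelSqNorm (i : ℕ) (f : Finset ι → ℝ) : ℝ :=
  ∑ s ∈ levelSet ι i, μlev Ω d i s * f s ^ 2

/-- The down operator `D_k^i` at a `k`-set `r`, as a conditional expectation; it is `0` where the
`i`-sets containing `r` carry no mass. -/
noncomputable def downOp (i : ℕ) (f : Finset ι → ℝ) (r : Finset ι) : ℝ :=
  (∑ s ∈ levelSet ι i with r ⊆ s, μlev Ω d i s * f s) /
    ∑ s ∈ levelSet ι i with r ⊆ s, μlev Ω d i s

/-- The up operator `U_i^{i+1}` at an `(i + 1)`-set `s`. -/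
noncomputable def upOp (g : Finset ι → ℝ) (s : Finset ι) : ℝ :=
  (∑ a ∈ s, g (s.erase a)) / s.card

variable {Ω d}

lemma levelSqNorm_nonneg (i : ℕ) (f : Finset ι → ℝ) : 0 ≤ levelSqNorm Ω d i f :=
  sum_nonneg fun s _ => mul_nonneg (μlev_nonneg i s) (sq_nonneg _)

lemma levelInner_self (i : ℕ) (f : Finset ι → ℝ) :
    levelInner Ω d i f f = levelSqNorm Ω d i f := by
  simp only [levelInner, levelSqNorm, mul_assoc, sq]

lemma sq_levelInner_le (i : ℕ) (f g : Finset ι → ℝ) :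
    levelInner Ω d i f g ^ 2 ≤ levelSqNorm Ω d i f * levelSqNorm Ω d i g :=
  sum_sq_le_sum_mul_sum_of_sq_le_mul _
    (fun s _ => mul_nonneg (μlev_nonneg i s) (sq_nonneg _))
    (fun s _ => mul_nonneg (μlev_nonneg i s) (sq_nonneg _)) (fun _ _ => le_of_eq (by ring))

lemma abs_levelInner_le (i : ℕ) (f g : Finset ι → ℝ) :
    |levelInner Ω d i f g| ≤ √(levelSqNorm Ω d i f) * √(levelSqNorm Ω d i g) := by
  rw [← Real.sqrt_mul (levelSqNorm_nonneg i f)]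
  exact Real.abs_le_sqrt (sq_levelInner_le i f g)

/-- If the mass vanishes, so does every summand on the right. -/
lemma mass_mul_downOp (i : ℕ) (f : Finset ι → ℝ) (r : Finset ι) :
    (∑ s ∈ levelSet ι i with r ⊆ s, μlev Ω d i s) * downOp Ω d i f r
      = ∑ s ∈ levelSet ι i with r ⊆ s, μlev Ω d i s * f s := by
  by_cases hM : ∑ s ∈ levelSet ι i with r ⊆ s, μlev Ω d i s = 0
  · rw [hM, zero_mul, eq_comm]
    refine sum_eq_zero fun s hs => ?_
    rw [(sum_eq_zero_iff_of_nonneg fun s _ => μlev_nonneg i s).1 hM s hs, zero_mul]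
  · exact mul_div_cancel₀ _ hM

lemma choose_mul_μlev_mul_downOp (hcard : ∀ D ∈ Ω, D.card = d) {r : Finset ι} {k i : ℕ}
    (hr : r.card = k) (hki : k ≤ i) (hid : i ≤ d) (f : Finset ι → ℝ) :
    i.choose k * μlev Ω d k r * downOp Ω d i f r
      = ∑ s ∈ levelSet ι i with r ⊆ s, μlev Ω d i s * f s := by
  rw [← sum_μlev_superset hcard hr hki hid, mass_mul_downOp]

lemma sq_downOp_le (i : ℕ) (f : Finset ι → ℝ) (r : Finset ι) :
    downOp Ω d i f r ^ 2 ≤ downOp Ω d i (fun s => f s ^ 2) r := by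
  unfold downOp
  rw [div_pow]
  set M := ∑ s ∈ levelSet ι i with r ⊆ s, μlev Ω d i s
  have hM : 0 ≤ M := sum_nonneg fun s _ => μlev_nonneg i s
  rcases hM.eq_or_lt with hM | hM
  · simp [← hM]
  rw [sq M, ← div_div, div_le_div_iff_of_pos_right hM, div_le_iff₀ hM]
  exact sum_sq_le_sum_mul_sum_of_sq_le_mul _
    (fun s _ => mul_nonneg (μlev_nonneg i s) (sq_nonneg _)) (fun s _ => μlev_nonneg i s)
    (fun _ _ => le_of_eq (by ring))

lemma levelMean_downOp (hcard : ∀ D ∈ Ω, D.card = d) {k i : ℕ} (hki : k ≤ i) (hid : i ≤ d)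
    (f : Finset ι → ℝ) :
    levelMean Ω d k (downOp Ω d i f) = levelMean Ω d i f := by
  have hC : (i.choose k : ℝ) ≠ 0 := by exact_mod_cast (Nat.choose_pos hki).ne'
  refine mul_left_cancel₀ hC ?_
  unfold levelMean
  rw [← sum_levelSet_sum_superset_const, mul_sum]
  refine sum_congr rfl fun r hr => ?_
  rw [← mul_assoc, choose_mul_μlev_mul_downOp hcard (mem_levelSet.1 hr) hki hid]

lemma levelSqNorm_downOp_le (hcard : ∀ D ∈ Ω, D.card = d) {k i : ℕ} (hki : k ≤ i)
    (hid : i ≤ d) (f : Finset ι → ℝ) :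
    levelSqNorm Ω d k (downOp Ω d i f) ≤ levelSqNorm Ω d i f :=
  calc levelSqNorm Ω d k (downOp Ω d i f)
      ≤ levelMean Ω d k (downOp Ω d i fun s => f s ^ 2) :=
        sum_le_sum fun r _ => mul_le_mul_of_nonneg_left (sq_downOp_le i f r) (μlev_nonneg k r)
    _ = levelSqNorm Ω d i f := levelMean_downOp hcard hki hid _

lemma downOp_downOp (hcard : ∀ D ∈ Ω, D.card = d) {r : Finset ι} {k j i : ℕ}
    (hr : r.card = k) (hkj : k ≤ j) (hji : j ≤ i) (hid : i ≤ d) (f : Finset ι → ℝ) :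
    downOp Ω d j (downOp Ω d i f) r = downOp Ω d i f r := by
  have hjd := hji.trans hid
  by_cases hμ : μlev Ω d k r = 0
  · have hmass : ∀ l, k ≤ l → l ≤ d → ∑ s ∈ levelSet ι l with r ⊆ s, μlev Ω d l s = 0 :=
      fun l hkl hld => by rw [sum_μlev_superset hcard hr hkl hld, hμ, mul_zero]
    simp only [downOp, hmass j hkj hjd, hmass i (hkj.trans hji) hid, div_zero]
  have hchoose : (i.choose j * j.choose k : ℝ) = i.choose k * (i - k).choose (j - k) := by
    exact_mod_cast Nat.choose_mul (n := i) hkj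
  have hij : (i.choose j : ℝ) ≠ 0 := by exact_mod_cast (Nat.choose_pos hji).ne'
  have hjk : (j.choose k : ℝ) ≠ 0 := by exact_mod_cast (Nat.choose_pos hkj).ne'
  have hcount : ∀ s ∈ levelSet ι i,
      ∑ t ∈ levelSet ι j with r ⊆ t, (if t ⊆ s then μlev Ω d i s * f s else 0)
        = (if r ⊆ s then ((i - k).choose (j - k) : ℝ) else 0) * (μlev Ω d i s * f s) := by
    intro s hs
    rw [sum_filter, ← sum_filter, ← sum_filter, filter_filter, sum_const, nsmul_eq_mul]
    split_ifs with hrs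
    · rw [card_filter_levelSet_subset_between hrs (hr ▸ hkj), mem_levelSet.1 hs, hr]
    · rw [(card_eq_zero.2 (filter_eq_empty_iff.2 fun t _ h => hrs (h.1.trans h.2)))]
      simp
  refine mul_left_cancel₀ (mul_ne_zero (mul_ne_zero hij hjk) hμ) ?_
  calc (i.choose j * j.choose k : ℝ) * μlev Ω d k r * downOp Ω d j (downOp Ω d i f) r
      = i.choose j * ∑ t ∈ levelSet ι j with r ⊆ t, μlev Ω d j t * downOp Ω d i f t := by
        rw [← choose_mul_μlev_mul_downOp hcard hr hkj hjd]; ring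
    _ = ∑ t ∈ levelSet ι j with r ⊆ t, ∑ s ∈ levelSet ι i with t ⊆ s, μlev Ω d i s * f s := by
        rw [mul_sum]
        refine sum_congr rfl fun t ht => ?_
        rw [← choose_mul_μlev_mul_downOp hcard (mem_levelSet.1 (mem_filter.1 ht).1) hji hid]
        ring
    _ = (i - k).choose (j - k) * ∑ s ∈ levelSet ι i with r ⊆ s, μlev Ω d i s * f s := by
        rw [sum_congr rfl fun t _ => sum_filter _ _, sum_comm, sum_congr rfl hcount, sum_filter,
          mul_sum]
        refine sum_congr rfl fun s _ => ?_
        split_ifs <;> simp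
    _ = (i.choose j * j.choose k : ℝ) * μlev Ω d k r * downOp Ω d i f r := by
        rw [← choose_mul_μlev_mul_downOp hcard hr (hkj.trans hji) hid, hchoose]; ring

lemma sum_downUp_mul_mul (hcard : ∀ D ∈ Ω, D.card = d) {k i : ℕ} (hki : k ≤ i) (hid : i ≤ d)
    (f g : Finset ι → ℝ) :
    ∑ s ∈ levelSet ι i, ∑ t ∈ levelSet ι i, downUp Ω d i k s t * f s * g t
      = levelInner Ω d k (downOp Ω d i f) (downOp Ω d i g) := by
  have hC : (i.choose k : ℝ) ≠ 0 := by exact_mod_cast (Nat.choose_pos hki).ne'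
  set M : Finset ι → ℝ := fun r => ∑ s ∈ levelSet ι i with r ⊆ s, μlev Ω d i s
  have hdownUp : ∀ s t, downUp Ω d i k s t * f s * g t
      = ∑ r ∈ levelSet ι k, if r ⊆ s ∧ r ⊆ t then
          (μlev Ω d i s * f s) * (μlev Ω d i t * g t) / (i.choose k * M r) else 0 := by
    intro s t
    simp only [downUp, levelSet, filter_filter, sum_mul, M, ← sum_filter]
    refine sum_congr rfl fun r _ => ?_
    ring
  simp_rw [hdownUp]
  rw [sum_congr rfl fun s _ => sum_comm, sum_comm, levelInner]
  refine sum_congr rfl fun r hr => ?_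
  have hμ : μlev Ω d k r = M r / i.choose k := by
    rw [eq_div_iff hC, mul_comm]
    exact (sum_μlev_superset hcard (mem_levelSet.1 hr) hki hid).symm
  have hsplit : M r / i.choose k * downOp Ω d i f r * downOp Ω d i g r
      = (M r * downOp Ω d i f r) * (M r * downOp Ω d i g r) / (i.choose k * M r) := by
    rcases eq_or_ne (M r) 0 with h0 | h0
    · simp [h0]
    · field_simp
  rw [hμ, hsplit, mass_mul_downOp, mass_mul_downOp, sum_mul_sum, sum_div, sum_filter]
  refine sum_congr rfl fun s _ => ?_
  rw [sum_div, sum_filter]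
  split_ifs <;> simp_all

lemma levelInner_downOp_eq_levelInner_upOp (hcard : ∀ D ∈ Ω, D.card = d) {m : ℕ}
    (hmd : m + 1 ≤ d) (f g : Finset ι → ℝ) :
    levelInner Ω d m (downOp Ω d (m + 1) f) g = levelInner Ω d (m + 1) f (upOp g) := by
  have hm : ((m + 1 : ℕ) : ℝ) ≠ 0 := Nat.cast_ne_zero.2 m.succ_ne_zero
  refine mul_left_cancel₀ hm ?_
  calc ((m + 1 : ℕ) : ℝ) * levelInner Ω d m (downOp Ω d (m + 1) f) g
      = ∑ t ∈ levelSet ι m, ∑ a ∈ tᶜ, μlev Ω d (m + 1) (insert a t) * f (insert a t)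
          * g ((insert a t).erase a) := by
        rw [levelInner, mul_sum]
        refine sum_congr rfl fun t ht => ?_
        have ht := mem_levelSet.1 ht
        have hC : ((m + 1 : ℕ) : ℝ) = (m + 1).choose m := by rw [Nat.choose_succ_self_right]
        rw [← mul_assoc, ← mul_assoc, hC,
          choose_mul_μlev_mul_downOp hcard ht m.le_succ hmd, sum_mul, ← ht,
          sum_levelSet_superset_eq_sum_insert]
        refine sum_congr rfl fun a ha => ?_
        rw [erase_insert (mem_compl.1 ha)]
    _ = ∑ s ∈ levelSet ι (m + 1), ∑ a ∈ s, μlev Ω d (m + 1) s * f s * g (s.erase a) :=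
        (sum_levelSet_succ_sum_mem m fun s a => μlev Ω d (m + 1) s * f s * g (s.erase a)).symm
    _ = ((m + 1 : ℕ) : ℝ) * levelInner Ω d (m + 1) f (upOp g) := by
        rw [levelInner, mul_sum]
        refine sum_congr rfl fun s hs => ?_
        rw [upOp, mem_levelSet.1 hs, ← mul_sum]
        field_simp

end Operators

section Links

variable {ι : Type} [DecidableEq ι] {Ω : Finset (Finset ι)} {d : ℕ}

lemma linkCount_comm (I : Finset ι) (u v : ι) : linkCount Ω I u v = linkCount Ω I v u := by
  unfold linkCount
  rw [pair_comm]
  exact if_congr (by tauto) rfl rfl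

lemma linkCount_eq_zero_of_not_subset {I : Finset ι} (hI : ¬∃ D ∈ Ω, I ⊆ D) (u v : ι) :
    linkCount Ω I u v = 0 := by
  unfold linkCount
  split_ifs
  · exact card_eq_zero.2
      (filter_eq_empty_iff.2 fun D hD h => hI ⟨D, hD, subset_union_left.trans h⟩)
  · rfl

variable [Fintype ι]

def IsLocalSpectralExpander (Ω : Finset (Finset ι)) (d : ℕ) (γ : ℝ) : Prop :=
  ∀ I : Finset ι, (∃ D ∈ Ω, I ⊆ D) → I.card ≤ d - 2 →
    ∀ f : ι → ℝ, (∑ u, (linkDeg Ω I u : ℝ) * f u) = 0 →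
      (∑ u, ∑ v, (linkCount Ω I u v : ℝ) * f u * f v) ≤
        γ * ∑ u, (linkDeg Ω I u : ℝ) * (f u) ^ 2

lemma sum_linkCount_mul (I : Finset ι) (u : ι) (G : ι → ℝ) :
    ∑ v, (linkCount Ω I u v : ℝ) * G v
      = if u ∈ I then 0
        else ∑ v ∈ (insert u I)ᶜ, (nFaces Ω (insert v (insert u I)) : ℝ) * G v := by
  split_ifs with hu
  · simp [linkCount, hu]
  rw [← sum_compl_add_sum (insert u I), sum_eq_zero (s := insert u I), add_zero]
  · refine sum_congr rfl fun v hv => ?_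
    have hv : v ∉ insert u I := mem_compl.1 hv
    rw [mem_insert, not_or] at hv
    have hpair : I ∪ {u, v} = insert v (insert u I) := by
      ext x
      simp only [mem_union, mem_insert, mem_singleton]
      tauto
    rw [linkCount, if_pos ⟨Ne.symm hv.1, hu, hv.2⟩, hpair, nFaces]
  · intro v hv
    rw [linkCount, if_neg, Nat.cast_zero, zero_mul]
    rw [mem_insert] at hv
    tauto

lemma sum_sum_linkCount_mul (I : Finset ι) (G : ι → ι → ℝ) :
    ∑ u, ∑ v, (linkCount Ω I u v : ℝ) * G u v
      = ∑ u ∈ Iᶜ, ∑ v ∈ (insert u I)ᶜ, (nFaces Ω (insert v (insert u I)) : ℝ) * G u v := by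
  rw [← sum_compl_add_sum I, sum_eq_zero (s := I) fun u hu => by rw [sum_linkCount_mul, if_pos hu],
    add_zero]
  exact sum_congr rfl fun u hu => by rw [sum_linkCount_mul, if_neg (mem_compl.1 hu)]

lemma sum_compl_nFaces_insert (hcard : ∀ D ∈ Ω, D.card = d) (t : Finset ι) :
    ∑ a ∈ tᶜ, (nFaces Ω (insert a t) : ℝ) = (d - t.card : ℕ) * nFaces Ω t := by
  rw [← sum_levelSet_superset_eq_sum_insert t fun s => (nFaces Ω s : ℝ),
    sum_nFaces_superset hcard (Nat.le_add_right _ 1),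
    Nat.add_sub_cancel_left, Nat.choose_one_right]

lemma linkDeg_eq (hcard : ∀ D ∈ Ω, D.card = d) (I : Finset ι) (u : ι) :
    (linkDeg Ω I u : ℝ)
      = if u ∈ I then 0 else ((d - I.card - 1 : ℕ) : ℝ) * nFaces Ω (insert u I) := by
  have h := sum_linkCount_mul (Ω := Ω) I u fun _ => 1
  simp only [mul_one] at h
  rw [linkDeg, Nat.cast_sum, h]
  split_ifs with hu
  · rfl
  · rw [sum_compl_nFaces_insert hcard, card_insert_of_notMem hu, Nat.sub_sub]

lemma sum_linkDeg_mul_insert (hΩ : Ω.Nonempty) (hcard : ∀ D ∈ Ω, D.card = d) {r : Finset ι}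
    {m : ℕ} (hr : r.card = m) (hmd : m + 2 ≤ d) (ψ : Finset ι → ℝ) :
    ∑ u, (linkDeg Ω r u : ℝ) * ψ (insert u r)
      = (m + 2) * (Ω.card * d.choose (m + 2))
          * ∑ t ∈ levelSet ι (m + 1) with r ⊆ t, μlev Ω d (m + 1) t * ψ t := by
  rw [← sum_compl_add_sum r, sum_eq_zero (s := r) fun u hu => by simp [linkDeg_eq hcard, hu],
    add_zero, ← hr, sum_levelSet_superset_eq_sum_insert, hr, mul_sum]
  refine sum_congr rfl fun u hu => ?_
  rw [linkDeg_eq hcard, if_neg (mem_compl.1 hu), hr, Nat.sub_sub, sub_mul_nFaces_eq hΩ hmd]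
  ring

lemma link_sum_mul_mul_le (hΩ : Ω.Nonempty) (hcard : ∀ D ∈ Ω, D.card = d) {γ : ℝ}
    (hγ : 0 ≤ γ) (hX : IsLocalSpectralExpander Ω d γ) {r : Finset ι} {m : ℕ} (hr : r.card = m)
    (hmd : m + 2 ≤ d) (g : Finset ι → ℝ) :
    ∑ u, ∑ v, (linkCount Ω r u v : ℝ) * g (insert u r) * g (insert v r)
      ≤ (m + 2) * (Ω.card * d.choose (m + 2)) *
          ((m + 1) * μlev Ω d m r * downOp Ω d (m + 1) g r ^ 2
            + γ * ∑ t ∈ levelSet ι (m + 1) with r ⊆ t, μlev Ω d (m + 1) t * g t ^ 2) := by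
  have hgap : ∀ f : ι → ℝ, ∑ u, (linkDeg Ω r u : ℝ) * f u = 0 →
      ∑ u, ∑ v, (linkCount Ω r u v : ℝ) * f u * f v ≤ γ * ∑ u, (linkDeg Ω r u : ℝ) * f u ^ 2 := by
    by_cases hface : ∃ D ∈ Ω, r ⊆ D
    · exact hX r hface (by omega)
    · intro f _
      simp [linkDeg, linkCount_eq_zero_of_not_subset hface]
  have key := sum_mul_mul_le_of_spectral_gap hγ (fun u v => by rw [linkCount_comm])
    (fun u => by rw [linkDeg, Nat.cast_sum]) (fun u => Nat.cast_nonneg _) hgap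
    fun u => g (insert u r)
  have hW := sum_linkDeg_mul_insert hΩ hcard hr hmd fun _ => 1
  have hT := sum_linkDeg_mul_insert hΩ hcard hr hmd fun t => g t ^ 2
  simp only [mul_one] at hW hT
  rw [hW, hT, sum_linkDeg_mul_insert hΩ hcard hr hmd, ← mass_mul_downOp,
    sum_μlev_superset hcard hr m.le_succ (by omega), Nat.choose_succ_self_right] at key
  refine key.trans (le_of_eq ?_)
  push_cast
  have hsq : ∀ a b : ℝ, (a * b) ^ 2 / a = a * b ^ 2 := fun a b => by
    rcases eq_or_ne a 0 with rfl | ha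
    · simp
    · field_simp
  rw [← mul_assoc _ _ (downOp Ω d (m + 1) g r), hsq]
  ring

end Links

section SpectralBounds

variable {ι : Type} [Fintype ι] [DecidableEq ι] {Ω : Finset (Finset ι)} {d : ℕ}

lemma sq_mul_levelSqNorm_upOp (hΩ : Ω.Nonempty) {m : ℕ} (hmd : m + 2 ≤ d)
    (g : Finset ι → ℝ) :
    ((m : ℝ) + 2) ^ 2 * (Ω.card * d.choose (m + 2)) * levelSqNorm Ω d (m + 2) (upOp g)
      = ∑ s ∈ levelSet ι (m + 2), (nFaces Ω s : ℝ) * (∑ a ∈ s, g (s.erase a)) ^ 2 := by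
  rw [levelSqNorm, mul_sum]
  refine sum_congr rfl fun s hs => ?_
  rw [nFaces_eq_mul_μlev hΩ hmd, upOp, mem_levelSet.1 hs]
  field_simp
  push_cast
  ring

/-- Garland's method: the off-diagonal part of `‖U g‖²` is a sum of quadratic forms of the links
of the `m`-sets. -/
lemma levelSqNorm_upOp_le (hΩ : Ω.Nonempty) (hcard : ∀ D ∈ Ω, D.card = d) {γ : ℝ}
    (hγ : 0 ≤ γ) (hX : IsLocalSpectralExpander Ω d γ) {m : ℕ} (hmd : m + 2 ≤ d)
    (g : Finset ι → ℝ) :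
    (m + 2) * levelSqNorm Ω d (m + 2) (upOp g)
      ≤ (1 + (m + 1) * γ) * levelSqNorm Ω d (m + 1) g
        + (m + 1) * levelSqNorm Ω d m (downOp Ω d (m + 1) g) := by
  set Z : ℝ := Ω.card * d.choose (m + 2)
  have hZ : 0 < Z := by
    have := Nat.choose_pos hmd
    have := hΩ.card_pos
    positivity
  have hdiag : ∀ t ∈ levelSet ι (m + 1),
      (∑ a ∈ tᶜ, (nFaces Ω (insert a t) : ℝ)) * g t ^ 2
        = (m + 2) * Z * (μlev Ω d (m + 1) t * g t ^ 2) := by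
    intro t ht
    rw [sum_compl_nFaces_insert hcard, mem_levelSet.1 ht, sub_mul_nFaces_eq hΩ hmd]
    ring
  have hlink : ∀ r ∈ levelSet ι m,
      ∑ u ∈ rᶜ, ∑ v ∈ (insert u r)ᶜ,
          (nFaces Ω (insert v (insert u r)) : ℝ) * g (insert u r) * g (insert v r)
        ≤ (m + 2) * Z * ((m + 1) * (μlev Ω d m r * downOp Ω d (m + 1) g r ^ 2)
            + γ * ∑ t ∈ levelSet ι (m + 1) with r ⊆ t, μlev Ω d (m + 1) t * g t ^ 2) := by
    intro r hr
    have h := sum_sum_linkCount_mul (Ω := Ω) r fun u v => g (insert u r) * g (insert v r)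
    simp only [← mul_assoc] at h
    rw [← h]
    exact (link_sum_mul_mul_le hΩ hcard hγ hX (mem_levelSet.1 hr) hmd g).trans_eq (by ring)
  have hbound := sum_le_sum hlink
  rw [← mul_sum, sum_add_distrib, ← mul_sum, ← mul_sum,
    sum_levelSet_sum_superset_const m (m + 1) fun t => μlev Ω d (m + 1) t * g t ^ 2,
    Nat.choose_succ_self_right] at hbound
  have hexpand := sum_mul_sq_sum_erase (fun s => (nFaces Ω s : ℝ)) g m
  rw [← sq_mul_levelSqNorm_upOp hΩ hmd, sum_congr rfl hdiag, ← mul_sum] at hexpand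
  refine le_of_mul_le_mul_left ?_ (show 0 < (m + 2) * Z by positivity)
  simp only [levelSqNorm] at hexpand hbound ⊢
  push_cast at hbound
  linarith

lemma downOp_empty_eq_zero {i : ℕ} {f : Finset ι → ℝ} (hf : levelMean Ω d i f = 0) :
    downOp Ω d i f ∅ = 0 := by
  rw [downOp, filter_true_of_mem fun s _ => empty_subset s]
  exact div_eq_zero_iff.2 (Or.inl hf)

/-- With `g = D h`, `‖g‖² = ⟪h, U g⟫ ≤ ‖h‖ ‖U g‖`, and Garland's bound together with the
induction hypothesis for `g` gives `‖U g‖² ≤ ((m + 1)/(m + 2) + (m + 1) γ) ‖g‖²`. -/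
theorem levelSqNorm_downOp_succ_le_of_levelMean_eq_zero (hΩ : Ω.Nonempty)
    (hcard : ∀ D ∈ Ω, D.card = d) {γ : ℝ} (hγ : 0 ≤ γ) (hX : IsLocalSpectralExpander Ω d γ)
    {m : ℕ} (hmd : m + 1 ≤ d) {h : Finset ι → ℝ} (hmean : levelMean Ω d (m + 1) h = 0) :
    levelSqNorm Ω d m (downOp Ω d (m + 1) h)
      ≤ ((m : ℝ) / (m + 1) + m * γ) * levelSqNorm Ω d (m + 1) h := by
  induction m generalizing h with
  | zero =>
    refine le_of_eq_of_le (sum_eq_zero fun r hr => ?_) (by simp)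
    rw [card_eq_zero.1 (mem_levelSet.1 hr), downOp_empty_eq_zero hmean]
    ring
  | succ m ih =>
    rw [show ((m + 1 : ℕ) : ℝ) = m + 1 by push_cast; rfl, show (m : ℝ) + 1 + 1 = m + 2 by ring]
    set g := downOp Ω d (m + 2) h
    set X := levelSqNorm Ω d (m + 1) g
    have hX0 : 0 ≤ X := levelSqNorm_nonneg _ _
    have hgmean : levelMean Ω d (m + 1) g = 0 :=
      (levelMean_downOp hcard (Nat.le_succ _) hmd h).trans hmean
    have hXinner : X = levelInner Ω d (m + 2) h (upOp g) := by
      rw [← levelInner_downOp_eq_levelInner_upOp hcard hmd, levelInner_self]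
    have hDg := ih (by omega) hgmean
    have hUg := levelSqNorm_upOp_le hΩ hcard hγ hX hmd g
    have hUgX : levelSqNorm Ω d (m + 2) (upOp g)
        ≤ (((m : ℝ) + 1) / (m + 2) + (m + 1) * γ) * X := by
      rw [div_add' _ _ _ (by positivity), div_mul_eq_mul_div, le_div_iff₀ (by positivity)]
      have : ((m : ℝ) + 1) * (m / (m + 1)) = m := by field_simp
      nlinarith [mul_nonneg hγ hX0]
    have hCS := sq_levelInner_le (Ω := Ω) (d := d) (m + 2) h (upOp g)
    rw [← hXinner] at hCS
    have hh0 := levelSqNorm_nonneg (Ω := Ω) (d := d) (m + 2) h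
    have hXX : X * X
        ≤ ((((m : ℝ) + 1) / (m + 2) + (m + 1) * γ) * levelSqNorm Ω d (m + 2) h) * X := by
      nlinarith [mul_le_mul_of_nonneg_left hUgX hh0]
    rcases hX0.eq_or_lt with h0 | h0
    · rw [← h0]
      positivity
    · exact le_of_mul_le_mul_right hXX h0

/-- The factor `min 1 (a + b γ) * (c + e γ)` is at most `a c + (b + e) γ` when `c ≤ 1`. -/
lemma le_mul_of_le_of_le_mul {X Y F a b c e γ τ₁ τ₂ : ℝ} (hXY : X ≤ Y)
    (hXa : X ≤ (a + b * γ) * Y) (hYF : Y ≤ (c + e * γ) * F) (ha : 0 ≤ a) (hb : 0 ≤ b)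
    (hc : 0 ≤ c) (hc1 : c ≤ 1) (he : 0 ≤ e) (hγ : 0 ≤ γ) (hF : 0 ≤ F) (hτ₁ : a * c = τ₁)
    (hτ₂ : b + e ≤ τ₂) :
    X ≤ (τ₁ + τ₂ * γ) * F := by
  have hbc : b * c * γ ≤ b * γ := by nlinarith [mul_nonneg hb hγ]
  have hτ : (a * c + (b + e) * γ) * F ≤ (τ₁ + τ₂ * γ) * F := by
    rw [hτ₁]; gcongr
  refine le_trans ?_ hτ
  rcases le_total (a + b * γ) 1 with hle | hle
  · calc X ≤ (a + b * γ) * Y := hXa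
      _ ≤ (a + b * γ) * ((c + e * γ) * F) := by gcongr
      _ = ((a + b * γ) * (c + e * γ)) * F := by ring
      _ ≤ (a * c + (b + e) * γ) * F := by
        gcongr ?_ * F
        nlinarith [mul_le_mul_of_nonneg_right hle (mul_nonneg he hγ)]
  · calc X ≤ Y := hXY
      _ ≤ (c + e * γ) * F := hYF
      _ ≤ (a * c + (b + e) * γ) * F := by
        gcongr ?_ * F
        nlinarith [mul_le_mul_of_nonneg_right hle hc]

/-- Induction on `p`, peeling off the bottom step `D_k^{k+p+1} = D_k^{k+1} ∘ D_{k+1}^{k+p+1}`. -/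
theorem levelSqNorm_downOp_le_of_levelMean_eq_zero (hΩ : Ω.Nonempty)
    (hcard : ∀ D ∈ Ω, D.card = d) {γ : ℝ} (hγ : 0 ≤ γ) (hX : IsLocalSpectralExpander Ω d γ)
    {k p : ℕ} (hp : 1 ≤ p) (hkd : k + p ≤ d) {f : Finset ι → ℝ}
    (hf : levelMean Ω d (k + p) f = 0) :
    levelSqNorm Ω d k (downOp Ω d (k + p) f)
      ≤ ((k : ℝ) / (k + p) + p * (k + p) * γ) * levelSqNorm Ω d (k + p) f := by
  induction p, hp using Nat.le_induction generalizing k with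
  | base =>
    refine (levelSqNorm_downOp_succ_le_of_levelMean_eq_zero hΩ hcard hγ hX hkd hf).trans
      (mul_le_mul_of_nonneg_right ?_ (levelSqNorm_nonneg _ _))
    push_cast
    gcongr
    linarith
  | succ p hp ih =>
    have hidx : k + 1 + p = k + (p + 1) := by omega
    set h := downOp Ω d (k + (p + 1)) f
    have hcomp : levelSqNorm Ω d k (downOp Ω d (k + (p + 1)) f)
        = levelSqNorm Ω d k (downOp Ω d (k + 1) h) :=
      sum_congr rfl fun r hr => by
        rw [downOp_downOp hcard (mem_levelSet.1 hr) k.le_succ (by omega) hkd]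
    have hhmean : levelMean Ω d (k + 1) h = 0 := (levelMean_downOp hcard (by omega) hkd f).trans hf
    have hYF := ih (by omega) (hidx ▸ hf)
    rw [hidx] at hYF
    rw [hcomp]
    push_cast at hYF ⊢
    have hk : (0 : ℝ) ≤ k := k.cast_nonneg
    have hp : (0 : ℝ) ≤ p := p.cast_nonneg
    refine le_mul_of_le_of_le_mul (levelSqNorm_downOp_le hcard k.le_succ (by omega) h)
      (levelSqNorm_downOp_succ_le_of_levelMean_eq_zero hΩ hcard hγ hX (by omega) hhmean) hYF
      (by positivity) hk (by positivity) ?_ (by positivity) hγ (levelSqNorm_nonneg _ _) ?_ ?_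
    · rw [div_le_one (by positivity)]
      linarith
    · field_simp
      ring
    · nlinarith

lemma abs_sum_downUp_mul_mul_le (hΩ : Ω.Nonempty) (hcard : ∀ D ∈ Ω, D.card = d) {γ : ℝ}
    (hγ : 0 ≤ γ) (hX : IsLocalSpectralExpander Ω d γ) {k i : ℕ} (hki : k < i) (hid : i ≤ d)
    {f g : Finset ι → ℝ} (hf : levelMean Ω d i f = 0) (hg : levelMean Ω d i g = 0) :
    |∑ s ∈ levelSet ι i, ∑ t ∈ levelSet ι i, downUp Ω d i k s t * f s * g t|
      ≤ ((k : ℝ) / i + (i - k) * i * γ) *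
          √(levelSqNorm Ω d i f) * √(levelSqNorm Ω d i g) := by
  obtain ⟨p, rfl⟩ : ∃ p, i = k + p := ⟨i - k, by omega⟩
  have hp : 1 ≤ p := by omega
  have hDf := levelSqNorm_downOp_le_of_levelMean_eq_zero hΩ hcard hγ hX hp hid hf
  have hDg := levelSqNorm_downOp_le_of_levelMean_eq_zero hΩ hcard hγ hX hp hid hg
  set c : ℝ := (k : ℝ) / (k + p) + p * (k + p) * γ
  have hc : 0 ≤ c := by positivity
  rw [sum_downUp_mul_mul hcard (by omega) hid]
  calc |levelInner Ω d k (downOp Ω d (k + p) f) (downOp Ω d (k + p) g)|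
      ≤ √(levelSqNorm Ω d k (downOp Ω d (k + p) f))
          * √(levelSqNorm Ω d k (downOp Ω d (k + p) g)) := abs_levelInner_le _ _ _
    _ ≤ √(c * levelSqNorm Ω d (k + p) f) * √(c * levelSqNorm Ω d (k + p) g) := by
        gcongr
    _ = (√c * √c) * √(levelSqNorm Ω d (k + p) f) * √(levelSqNorm Ω d (k + p) g) := by
        rw [Real.sqrt_mul hc, Real.sqrt_mul hc]
        ring
    _ = _ := by
        rw [Real.mul_self_sqrt hc]
        push_cast
        ring

end SpectralBounds

/-- There is `C > 0` such that: if `X` is a `d`-dimensional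
simplicial complex (top faces `Ω`, all of size `d`) which is a `γ` one-sided local
spectral expander (every link of a face of size at most `d − 2` has 1-skeleton
with second eigenvalue at most `γ`, stated via the quadratic form on mean-zero
functions), then for all `i ≤ d` and `1 < k < i` (i.e. `α = k/i ∈ (1/i, 1)`), the
down-up random walk on `X(i)` through uniformly random `k`-subsets has second
largest singular value at most `k/i + poly(i)·γ`. -/
theorem stmt16 : ∃ C : ℝ, 0 < C ∧
    ∀ (ι : Type) [Fintype ι] [DecidableEq ι] (d : ℕ) (Ω : Finset (Finset ι)),
      Ω.Nonempty → (∀ D ∈ Ω, D.card = d) →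
      ∀ γ : ℝ, 0 ≤ γ →
      (∀ I : Finset ι, (∃ D ∈ Ω, I ⊆ D) → I.card ≤ d - 2 →
        ∀ f : ι → ℝ, (∑ u, (linkDeg Ω I u : ℝ) * f u) = 0 →
          (∑ u, ∑ v, (linkCount Ω I u v : ℝ) * f u * f v) ≤
            γ * ∑ u, (linkDeg Ω I u : ℝ) * (f u) ^ 2) →
      ∀ i k : ℕ, 1 < k → k < i → i ≤ d →
      ∀ f g : Finset ι → ℝ,
        (∑ s ∈ levelSet ι i, μlev Ω d i s * f s) = 0 →
        (∑ s ∈ levelSet ι i, μlev Ω d i s * g s) = 0 →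
        |∑ s ∈ levelSet ι i, ∑ t ∈ levelSet ι i, downUp Ω d i k s t * f s * g t| ≤
          ((k : ℝ) / (i : ℝ) + (i : ℝ) ^ C * γ) *
            Real.sqrt (∑ s ∈ levelSet ι i, μlev Ω d i s * (f s) ^ 2) *
            Real.sqrt (∑ s ∈ levelSet ι i, μlev Ω d i s * (g s) ^ 2) := by
  refine ⟨2, two_pos, fun ι _ _ d Ω hΩ hcard γ hγ hX i k _ hki hid f g hf hg => ?_⟩
  refine (abs_sum_downUp_mul_mul_le hΩ hcard hγ hX hki hid hf hg).trans ?_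
  have hcoef : ((i : ℝ) - k) * i ≤ (i : ℝ) ^ (2 : ℝ) := by
    rw [Real.rpow_two]
    nlinarith [(k.cast_nonneg : (0 : ℝ) ≤ k), (i.cast_nonneg : (0 : ℝ) ≤ i)]
  have hcoefγ : ((k : ℝ) / i + (i - k) * i * γ) ≤ (k : ℝ) / i + (i : ℝ) ^ (2 : ℝ) * γ := by
    gcongr
  exact mul_le_mul_of_nonneg_right (mul_le_mul_of_nonneg_right hcoefγ (Real.sqrt_nonneg _))
    (Real.sqrt_nonneg _)
end
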